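/- arXiv:1911.11440 — 8 statements merged into one kernel-verified Lean document; each statement's English description precedes it below -/
import Mathlib

section
/- Let μ = i₁i₂⋯i_r and ν = j₁j₂⋯j_s with r, s ≥ 1, where i₁ ≥ i₂ ≥ ⋯ ≥ i_r and j₁ ≥ j₂ ≥ ⋯ ≥ j_s are Lyndon words. Suppose the first letter of i₁ is strictly greater than the first letter of j₁. Then the lexicographically greatest shuffle w of μ and ν has the form w = i₁ ⬝ w′, where w′ is a shuffle of i₂⋯i_r and ν. -/
/-- `IsShuffle μ ν w` means that `w` is an interleaving (shuffle) of the words `μ` and `ν`: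
the positions of `w` split into two complementary increasing subsequences whose subwords
are `μ` and `ν` respectively. -/
inductive IsShuffle {α : Type*} : List α → List α → List α → Prop
  | nil : IsShuffle [] [] []
  | left {a : α} {μ ν w : List α} : IsShuffle μ ν w → IsShuffle (a :: μ) ν (a :: w)
  | right {a : α} {μ ν w : List α} : IsShuffle μ ν w → IsShuffle μ (a :: ν) (a :: w)

/-- A nonempty word `u` is a Lyndon word if it is lexicographically strictly smaller than
every proper nonempty suffix of itself. -/
def IsLyndon {α : Type*} [LinearOrder α] (u : List α) : Prop :=
  u ≠ [] ∧ ∀ v : List α, v ≠ [] → v ≠ u → v <:+ u → u < v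

/-- Any two words can be shuffled by concatenation. -/
lemma isShuffle_append {α : Type*} (m ν : List α) : IsShuffle m ν (m ++ ν) := by
  induction m with
  | nil =>
    simp only [List.nil_append]
    induction ν with
    | nil => exact .nil
    | cons c t ih => exact .right ih
  | cons a m ih => exact .left ih

/-- Prepending a word to the left component of a shuffle. -/
lemma IsShuffle.append_left {α : Type*} {m ν w : List α} (u : List α)
    (h : IsShuffle m ν w) : IsShuffle (u ++ m) ν (u ++ w) := by
  induction u with
  | nil => exact h
  | cons a u ih => exact .left ih

/-- Key lemma: if every letter that can start `ν` is smaller than the head of every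
nonempty suffix of `u`, then any shuffle of `u ++ m` with `ν` is at most `u ++ w'` for
some shuffle `w'` of `m` and `ν`. -/
lemma key {α : Type*} [LinearOrder α] :
    ∀ (u m ν w : List α), IsShuffle (u ++ m) ν w →
      (∀ (d : α) (s' : List α) (c : α) (t : List α),
        (d :: s') <:+ u → ν = c :: t → c < d) →
      ∃ w', IsShuffle m ν w' ∧ w ≤ u ++ w' := by
  intro u
  induction u with
  | nil =>
    intro m ν w hs _
    exact ⟨w, hs, le_refl w⟩
  | cons a u ih =>
    intro m ν w hs H
    cases hs with
    | @left _ _ _ w₀ h₀ =>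
      obtain ⟨w', hw', hle⟩ := ih m ν w₀ h₀ (fun d s' c t hsuf hν =>
        H d s' c t (hsuf.trans (List.suffix_cons a u)) hν)
      exact ⟨w', hw', List.cons_le_cons a hle⟩
    | @right c _ ν' w₀ h₀ =>
      have hca : c < a := H a u c ν' (List.suffix_refl _) rfl
      refine ⟨c :: (m ++ ν'), .right (isShuffle_append m ν'), ?_⟩
      exact le_of_lt (List.Lex.rel hca)

/-- if `μ = i₁ ⋯ i_r` and `ν = j₁ ⋯ j_s` are concatenations of weakly decreasing
sequences of Lyndon words, and the first letter of `i₁` is strictly greater than the first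
letter of `j₁`, then the lexicographically greatest shuffle `w` of `μ` and `ν` has the form
`w = i₁ ++ w'` with `w'` a shuffle of `i₂ ⋯ i_r` and `ν`. -/
theorem stmt0 {α : Type*} [LinearOrder α]
    (i₁ : List α) (itl : List (List α)) (j₁ : List α) (jtl : List (List α))
    (hLI : ∀ u ∈ i₁ :: itl, IsLyndon u)
    (hLJ : ∀ u ∈ j₁ :: jtl, IsLyndon u)
    (hdecI : List.Chain' (fun u v : List α => v ≤ u) (i₁ :: itl))
    (hdecJ : List.Chain' (fun u v : List α => v ≤ u) (j₁ :: jtl))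
    (hi : i₁ ≠ []) (hj : j₁ ≠ [])
    (hhead : j₁.head hj < i₁.head hi)
    (w : List α)
    (hshuf : IsShuffle ((i₁ :: itl).flatten) ((j₁ :: jtl).flatten) w)
    (hgreatest : ∀ w', IsShuffle ((i₁ :: itl).flatten) ((j₁ :: jtl).flatten) w' → w' ≤ w) :
    ∃ w', IsShuffle itl.flatten ((j₁ :: jtl).flatten) w' ∧ w = i₁ ++ w' := by
  have hLy : IsLyndon i₁ := hLI i₁ (by simp)
  have hflat : (i₁ :: itl).flatten = i₁ ++ itl.flatten := by simp
  rw [hflat] at hshuf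
  -- the head condition for `key`
  have H : ∀ (d : α) (s' : List α) (c : α) (t : List α),
      (d :: s') <:+ i₁ → (j₁ :: jtl).flatten = c :: t → c < d := by
    intro d s' c t hsuf hν
    -- c is the head of j₁
    have hνflat : (j₁ :: jtl).flatten = j₁ ++ jtl.flatten := by simp
    have hc : c = j₁.head hj := by
      rw [hνflat] at hν
      cases j₁ with
      | nil => exact absurd rfl hj
      | cons x xs => simpa using congrArg (fun l => l.head?) hν.symm
    -- head i₁ ≤ d since d::s' is a nonempty suffix of the Lyndon word i₁
    have hd : i₁.head hi ≤ d := by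
      by_cases heq : (d :: s') = i₁
      · subst heq; rfl
      · have hlt : i₁ < d :: s' := hLy.2 (d :: s') (by simp) heq hsuf
        cases i₁ with
        | nil => exact absurd rfl hi
        | cons y ys => exact List.head_le_of_lt hlt
    calc c = j₁.head hj := hc
    _ < i₁.head hi := hhead
    _ ≤ d := hd
  obtain ⟨w', hw', hle⟩ := key i₁ itl.flatten ((j₁ :: jtl).flatten) w hshuf H
  have hge : i₁ ++ w' ≤ w := by
    apply hgreatest
    rw [hflat]
    exact hw'.append_left i₁
  exact ⟨w', hw', le_antisymm hle hge⟩
end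

section
/- Let μ = i₁i₂⋯i_r and ν = j₁j₂⋯j_s with r, s ≥ 1, where i₁ ≥ i₂ ≥ ⋯ ≥ i_r and j₁ ≥ j₂ ≥ ⋯ ≥ j_s are Lyndon words. Suppose i₁ ≥ j₁, that the first letters of i₁ and j₁ are equal (call this letter a), and that every letter of i₁ other than its first is strictly greater than a (i.e., a occurs exactly once in i₁). Then the lexicographically greatest shuffle w of μ and ν satisfies: either w = i₁ ⬝ w′ for some shuffle w′ of i₂⋯i_r and ν, or i₁ = j₁ and w = j₁ ⬝ w″ for some shuffle w″ of μ and j₂⋯j_s. In particular, if i₁ > j₁ then the first alternative holds. -/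
/-!
Write `i₁ = a t` and `j₁ = a s`. Since `i₁` is Lyndon and `a` occurs in it once, every letter of
`t` exceeds `a`; `s ≤ t`; and the word `j₂ ⋯` following `j₁` starts with a letter at most `a`.
The greatest shuffle starts with `a`, taken either from `μ` or from `ν`. Taking it from `μ`, the
letters of `t` beat the `a` waiting in `ν`, so `t` is read off completely first. Taking it from
`ν`, the shuffle reads `s` against the `a` of `μ`, which loses to every letter of `t`; so it is
beaten by `a t ⋯` unless `s = t`, after which the rest is a shuffle of `μ` and `j₂ ⋯ j_s`.
-/

section

variable {α : Type*}

namespace IsShuffle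

theorem perm {A B w : List α} : IsShuffle A B w → w.Perm (A ++ B)
  | .nil => .nil
  | .left h => h.perm.cons _
  | .right h => (h.perm.cons _).trans List.perm_middle.symm

theorem append_left_s1 (p : List α) {A B w : List α} (h : IsShuffle A B w) :
    IsShuffle (p ++ A) B (p ++ w) := by
  induction p with
  | nil => exact h
  | cons a p ih => exact .left ih

theorem append_right (p : List α) {A B w : List α} (h : IsShuffle A B w) :
    IsShuffle A (p ++ B) (p ++ w) := by
  induction p with
  | nil => exact h
  | cons b p ih => exact .right ih

end IsShuffle

theorem isShuffle_append_s1 : ∀ A B : List α, IsShuffle A B (A ++ B)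
  | [], [] => .nil
  | [], _ :: B => .right (isShuffle_append_s1 [] B)
  | _ :: A, B => .left (isShuffle_append_s1 A B)

variable [LinearOrder α]

-- Core's `List.cons_le_cons_iff` is stated for core's `≤` on lists, not for the one of
-- Mathlib's `LinearOrder (List α)`.
theorem List.cons_le_cons_iff_of_linearOrder {a b : α} {l₁ l₂ : List α} :
    a :: l₁ ≤ b :: l₂ ↔ a < b ∨ a = b ∧ l₁ ≤ l₂ := by
  simp only [← not_lt, List.cons_lt_cons_iff]
  grind

theorem exists_isGreatest_shuffle (A B : List α) : ∃ w, IsGreatest {w | IsShuffle A B w} w := by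
  have hfin : {w | IsShuffle A B w}.Finite :=
    (A ++ B).permutations.finite_toSet.subset fun _ hw => List.mem_permutations.2 hw.perm
  obtain ⟨w, hw, hmax⟩ := Set.exists_max_image _ id hfin ⟨_, isShuffle_append_s1 A B⟩
  exact ⟨w, hw, hmax⟩

theorem IsLyndon.head_lt_of_mem_tail {a b : α} {t : List α} (h : IsLyndon (a :: t))
    (ha : a ∉ t) (hb : b ∈ t) : a < b := by
  obtain ⟨p, q, rfl⟩ := List.append_of_mem hb
  have hne : b :: q ≠ a :: (p ++ b :: q) := fun h => by
    have := congrArg List.length h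
    simp at this
    omega
  have hlt := h.2 (b :: q) (List.cons_ne_nil _ _) hne ⟨a :: p, rfl⟩
  exact (List.head_le_of_lt hlt).lt_of_ne (by rintro rfl; exact ha hb)

theorem append_mem_upperBounds_shuffle {a : α} {t M ρ m : List α} (ht : ∀ b ∈ t, a < b)
    (hm : m ∈ upperBounds {v | IsShuffle M (a :: ρ) v}) :
    t ++ m ∈ upperBounds {v | IsShuffle (t ++ M) (a :: ρ) v} := by
  induction t with
  | nil => exact hm
  | cons d t ih =>
    intro v hv
    cases hv with
    | left hv => exact List.cons_le_cons d (ih (fun b hb => ht b (.tail _ hb)) hv)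
    | right => exact le_of_lt (List.Lex.rel (ht d List.mem_cons_self))

theorem lt_or_eq_and_le_of_isShuffle_cons_append {a : α} {r s u N y v : List α}
    (hu : ∀ b ∈ u, a < b) (hsu : s ≤ u) (hN : ∀ c ∈ N.head?, c ≤ a)
    (hy : y ∈ upperBounds {v | IsShuffle (a :: r) N v}) (hv : IsShuffle (a :: r) (s ++ N) v) :
    v < u ∨ s = u ∧ v ≤ s ++ y := by
  induction s generalizing u v with
  | nil =>
    cases u with
    | nil => exact .inr ⟨rfl, hy hv⟩
    | cons d u =>
      have had := hu d List.mem_cons_self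
      cases hv with
      | left => exact .inl (List.Lex.rel had)
      | right => exact .inl (List.Lex.rel ((hN _ rfl).trans_lt had))
  | cons c s ih =>
    cases u with
    | nil => exact absurd hsu (not_le_of_gt (List.Lex.nil))
    | cons d u =>
      have had := hu d List.mem_cons_self
      cases hv with
      | left => exact .inl (List.Lex.rel had)
      | right hv =>
        rcases List.cons_le_cons_iff_of_linearOrder.1 hsu with hcd | ⟨rfl, hs⟩
        · exact .inl (List.Lex.rel hcd)
        · rcases ih (fun b hb => hu b (.tail _ hb)) hs hv with hlt | ⟨rfl, hle⟩
          · exact .inl (List.cons_lt_cons_iff.2 (.inr ⟨rfl, hlt⟩))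
          · exact .inr ⟨rfl, List.cons_le_cons c hle⟩

theorem eq_cons_append_of_isGreatest_shuffle {a : α} {t s M N w : List α}
    (ht : ∀ b ∈ t, a < b) (hst : s ≤ t) (hN : ∀ c ∈ N.head?, c ≤ a)
    (hw : IsGreatest {v | IsShuffle (a :: t ++ M) (a :: s ++ N) v} w) :
    (∃ m, IsShuffle M (a :: s ++ N) m ∧ w = a :: t ++ m) ∨
      s = t ∧ ∃ y, IsShuffle (a :: t ++ M) N y ∧ w = a :: s ++ y := by
  obtain ⟨m, hm, hm_ub⟩ := exists_isGreatest_shuffle M (a :: s ++ N)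
  obtain ⟨y, hy, hy_ub⟩ := exists_isGreatest_shuffle (a :: t ++ M) N
  obtain ⟨hw, hw_ub⟩ := hw
  have hmw : a :: t ++ m ≤ w := hw_ub (.left (hm.append_left_s1 t))
  cases hw with
  | left hw =>
    have hle := append_mem_upperBounds_shuffle ht hm_ub hw
    exact .inl ⟨m, hm, le_antisymm (List.cons_le_cons a hle) hmw⟩
  | right hw =>
    rcases lt_or_eq_and_le_of_isShuffle_cons_append ht hst hN hy_ub hw with hlt | ⟨rfl, hle⟩
    · have : a :: _ < a :: t ++ m :=
        List.cons_lt_cons_iff.2 (.inr ⟨rfl, hlt.trans_le (not_lt.1 (List.prefix_append t m).le)⟩)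
      exact absurd hmw (not_le_of_gt this)
    · have hyw : a :: s ++ y ≤ _ := hw_ub (.right (hy.append_right s))
      exact .inr ⟨rfl, y, hy, le_antisymm (List.cons_le_cons a hle) hyw⟩

end

theorem stmt1_general {α : Type*} [LinearOrder α]
    (i₁ : List α) (itl : List (List α)) (j₁ : List α) (jtl : List (List α))
    (hLI : ∀ u ∈ i₁ :: itl, IsLyndon u)
    (hLJ : ∀ u ∈ j₁ :: jtl, IsLyndon u)
    (hdecJ : List.Chain' (fun u v : List α => v ≤ u) (j₁ :: jtl))
    (hi : i₁ ≠ []) (hj : j₁ ≠ [])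
    (hij : j₁ ≤ i₁)
    (hhead : i₁.head hi = j₁.head hj)
    (hcount : List.count (i₁.head hi) i₁ = 1)
    (w : List α)
    (hshuf : IsShuffle ((i₁ :: itl).flatten) ((j₁ :: jtl).flatten) w)
    (hgreatest : ∀ w', IsShuffle ((i₁ :: itl).flatten) ((j₁ :: jtl).flatten) w' → w' ≤ w) :
    ((∃ w', IsShuffle itl.flatten ((j₁ :: jtl).flatten) w' ∧ w = i₁ ++ w') ∨
      (i₁ = j₁ ∧ ∃ w'', IsShuffle ((i₁ :: itl).flatten) jtl.flatten w'' ∧ w = j₁ ++ w'')) ∧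
    (j₁ < i₁ → ∃ w', IsShuffle itl.flatten ((j₁ :: jtl).flatten) w' ∧ w = i₁ ++ w') := by
  obtain ⟨a, t, rfl⟩ := List.exists_cons_of_ne_nil hi
  obtain ⟨b, s, rfl⟩ := List.exists_cons_of_ne_nil hj
  obtain rfl : a = b := hhead
  have hat : a ∉ t := List.count_eq_zero.1 (by simpa using hcount)
  have ht : ∀ b ∈ t, a < b := fun _ => (hLI _ List.mem_cons_self).head_lt_of_mem_tail hat
  have hN : ∀ c ∈ jtl.flatten.head?, c ≤ a := by
    rcases jtl with _ | ⟨j₂, jtl⟩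
    · simp
    · obtain ⟨e, j₂, rfl⟩ := List.exists_cons_of_ne_nil (hLJ j₂ (by simp)).1
      have hej : e :: j₂ ≤ a :: s := (List.isChain_cons_cons.1 hdecJ).1
      simp only [List.flatten_cons, List.cons_append, List.head?_cons, Option.mem_def,
        Option.some.injEq, forall_eq']
      exact (List.cons_le_cons_iff_of_linearOrder.1 hej).elim le_of_lt (·.1.le)
  have hst : s ≤ t :=
    (List.cons_le_cons_iff_of_linearOrder.1 hij).elim (absurd · (lt_irrefl a)) (·.2)
  rcases eq_cons_append_of_isGreatest_shuffle ht hst hN ⟨hshuf, hgreatest⟩ with h | ⟨rfl, h⟩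
  · exact ⟨.inl h, fun _ => h⟩
  · exact ⟨.inr ⟨rfl, h⟩, fun h => absurd h (lt_irrefl _)⟩

/-- with `i₁ ≥ j₁`, equal first letters `a`, and `a` occurring exactly once in
`i₁` (equivalently, every letter of `i₁` other than its first is strictly greater than `a`),
the lexicographically greatest shuffle `w` of `μ = i₁ ⋯ i_r` and `ν = j₁ ⋯ j_s` is of the form
`i₁ ++ (shuffle of i₂ ⋯ i_r and ν)`, or `i₁ = j₁` and `w = j₁ ++ (shuffle of μ and j₂ ⋯ j_s)`.
In particular, if `i₁ > j₁` then the first alternative holds. -/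
theorem stmt1 {α : Type*} [LinearOrder α]
    (i₁ : List α) (itl : List (List α)) (j₁ : List α) (jtl : List (List α))
    (hLI : ∀ u ∈ i₁ :: itl, IsLyndon u)
    (hLJ : ∀ u ∈ j₁ :: jtl, IsLyndon u)
    (hdecI : List.Chain' (fun u v : List α => v ≤ u) (i₁ :: itl))
    (hdecJ : List.Chain' (fun u v : List α => v ≤ u) (j₁ :: jtl))
    (hi : i₁ ≠ []) (hj : j₁ ≠ [])
    (hij : j₁ ≤ i₁)
    (hhead : i₁.head hi = j₁.head hj)
    (hcount : List.count (i₁.head hi) i₁ = 1)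
    (w : List α)
    (hshuf : IsShuffle ((i₁ :: itl).flatten) ((j₁ :: jtl).flatten) w)
    (hgreatest : ∀ w', IsShuffle ((i₁ :: itl).flatten) ((j₁ :: jtl).flatten) w' → w' ≤ w) :
    ((∃ w', IsShuffle itl.flatten ((j₁ :: jtl).flatten) w' ∧ w = i₁ ++ w') ∨
      (i₁ = j₁ ∧ ∃ w'', IsShuffle ((i₁ :: itl).flatten) jtl.flatten w'' ∧ w = j₁ ++ w'')) ∧
    (j₁ < i₁ → ∃ w', IsShuffle itl.flatten ((j₁ :: jtl).flatten) w' ∧ w = i₁ ++ w') :=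
  stmt1_general i₁ itl j₁ jtl hLI hLJ hdecJ hi hj hij hhead hcount w hshuf hgreatest
end

section
/- Let μ = i₁i₂⋯i_r and ν = j₁j₂⋯j_s with r, s ≥ 1, where i₁ ≥ i₂ ≥ ⋯ ≥ i_r and j₁ ≥ j₂ ≥ ⋯ ≥ j_s are Lyndon words. Suppose i₁ ≥ j₁, that the first letters of i₁ and j₁ are equal (call this letter a), that a occurs exactly twice in i₁, and that a occurs exactly once in j₁. Then the lexicographically greatest shuffle w of μ and ν has the form w = i₁ ⬝ w′, where w′ is a shuffle of i₂⋯i_r and ν. -/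
section

variable {α : Type*}

namespace IsShuffle

theorem symm {u v w : List α} (h : IsShuffle u v w) : IsShuffle v u w := by
  induction h with
  | nil => exact .nil
  | left _ ih => exact .right ih
  | right _ ih => exact .left ih

theorem append : ∀ u v : List α, IsShuffle u v (u ++ v)
  | [], [] => .nil
  | [], _ :: v => .right (append [] v)
  | _ :: u, v => .left (append u v)

theorem eq_of_nil_left : ∀ {v w : List α}, IsShuffle [] v w → w = v
  | _, _, .nil => rfl
  | _, _, .right h => by rw [eq_of_nil_left h]

theorem eq_of_nil_right : ∀ {u w : List α}, IsShuffle u [] w → w = u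
  | _, _, .nil => rfl
  | _, _, .left h => by rw [eq_of_nil_right h]

end IsShuffle

theorem exists_eq_append_cons_of_count_eq_one [BEq α] [LawfulBEq α] {a : α} {t : List α}
    (h : t.count a = 1) : ∃ x y, t = x ++ a :: y ∧ a ∉ x ∧ a ∉ y := by
  obtain ⟨x, y, rfl⟩ := List.append_of_mem (List.count_pos_iff.mp (by omega : 0 < t.count a))
  simp only [List.count_append, List.count_cons_self] at h
  exact ⟨x, y, rfl, List.count_eq_zero.mp (by omega), List.count_eq_zero.mp (by omega)⟩

section LinearOrder

variable [LinearOrder α]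

theorem append_le_append_of_lt {p q X Y : List α} (hpq : p < q)
    (h : ∀ r, q = p ++ r → X ≤ r ++ Y) : p ++ X ≤ q ++ Y := by
  induction p generalizing q with
  | nil => exact h q rfl
  | cons c p ih =>
    cases q with
    | nil => exact absurd hpq (List.not_lt_nil _)
    | cons d q =>
      rcases List.cons_lt_cons_iff.mp hpq with hcd | ⟨rfl, hpq'⟩
      · exact le_of_lt (List.Lex.rel hcd)
      · exact List.cons_le_cons c (ih hpq' fun r hr => h r (by rw [hr, List.cons_append]))

-- Mathlib's `≤` on lists is not core's `List.le`, so `List.cons_le_cons_iff` does not apply to it.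
theorem cons_le_cons_iff_lex {a b : α} {l m : List α} :
    a :: l ≤ b :: m ↔ a < b ∨ a = b ∧ l ≤ m := by
  simp only [le_iff_lt_or_eq (a := a :: l), le_iff_lt_or_eq (a := l), List.cons_eq_cons]
  rw [List.cons_lt_cons_iff]
  tauto

namespace IsShuffle

theorem exists_ge_of_transfer_prefix {U y s : List α} (h : IsShuffle U y s) :
    ∀ {σ x : List α}, U = σ ++ x → y ≤ x → ∃ t, IsShuffle x (σ ++ y) t ∧ s ≤ t := by
  induction h with
  | nil =>
    intro σ x hU _
    obtain ⟨rfl, rfl⟩ := List.append_eq_nil_iff.mp hU.symm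
    exact ⟨[], .nil, le_rfl⟩
  | @left c U y s h ih =>
    intro σ x hU hyx
    cases σ with
    | nil =>
      obtain rfl : x = c :: U := by simpa using hU.symm
      exact ⟨c :: s, h.left, le_rfl⟩
    | cons c' σ =>
      rw [List.cons_append, List.cons_eq_cons] at hU
      obtain ⟨rfl, hU⟩ := hU
      obtain ⟨t, ht, hst⟩ := ih hU hyx
      exact ⟨c :: t, .right ht, List.cons_le_cons c hst⟩
  | @right f U y s h ih =>
    intro σ x hU hyx
    cases x with
    | nil => exact absurd hyx (not_le.mpr (List.nil_lt_cons f y))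
    | cons e x =>
      rcases cons_le_cons_iff_lex.mp hyx with hfe | ⟨rfl, hyx'⟩
      · exact ⟨e :: (x ++ (σ ++ f :: y)), .left (.append _ _), le_of_lt (List.Lex.rel hfe)⟩
      · -- `s` took `f` from `y` where it could as well have taken it from `x`: move it into `σ`.
        obtain ⟨t, ht, hst⟩ := ih (σ := σ ++ [f]) (by simp [hU]) hyx'
        exact ⟨f :: t, .left (by simpa using ht), List.cons_le_cons f hst⟩

end IsShuffle

def maxShuffle : List α → List α → List α
  | [], v => v
  | u, [] => u
  | c :: u, d :: v =>
      if d :: v ≤ c :: u then c :: maxShuffle u (d :: v) else d :: maxShuffle (c :: u) v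
termination_by u v => u.length + v.length

@[simp]
theorem maxShuffle_nil_left (v : List α) : maxShuffle [] v = v := by
  cases v <;> simp [maxShuffle]

@[simp]
theorem maxShuffle_nil_right (u : List α) : maxShuffle u [] = u := by
  cases u <;> simp [maxShuffle]

theorem maxShuffle_cons_cons (c d : α) (u v : List α) :
    maxShuffle (c :: u) (d :: v) =
      if d :: v ≤ c :: u then c :: maxShuffle u (d :: v) else d :: maxShuffle (c :: u) v := by
  rw [maxShuffle]

theorem isShuffle_maxShuffle : ∀ u v : List α, IsShuffle u v (maxShuffle u v)
  | [], v => by simpa using IsShuffle.append [] v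
  | c :: u, [] => by simpa using IsShuffle.append (c :: u) []
  | c :: u, d :: v => by
    rw [maxShuffle_cons_cons]
    split_ifs
    · exact .left (isShuffle_maxShuffle u (d :: v))
    · exact .right (isShuffle_maxShuffle (c :: u) v)
termination_by u v => u.length + v.length

theorem IsShuffle.le_maxShuffle : ∀ {u v w : List α}, IsShuffle u v w → w ≤ maxShuffle u v
  | _, _, _, .nil => by simp
  | _, [], _, .left h => by rw [maxShuffle_nil_right, h.eq_of_nil_right]
  | [], _, _, .right h => by rw [maxShuffle_nil_left, h.eq_of_nil_left]
  | c :: u, d :: v, _, .left h => by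
    rw [maxShuffle_cons_cons]
    split_ifs with hvu
    · exact List.cons_le_cons c h.le_maxShuffle
    · rcases List.cons_lt_cons_iff.mp (not_le.mp hvu) with hcd | ⟨rfl, huv⟩
      · exact le_of_lt (List.Lex.rel hcd)
      · obtain ⟨t, ht, hwt⟩ := h.symm.exists_ge_of_transfer_prefix (σ := [c]) rfl huv.le
        exact List.cons_le_cons c (hwt.trans ht.symm.le_maxShuffle)
  | c :: u, d :: v, _, .right h => by
    rw [maxShuffle_cons_cons]
    split_ifs with hvu
    · rcases cons_le_cons_iff_lex.mp hvu with hdc | ⟨rfl, hvu'⟩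
      · exact le_of_lt (List.Lex.rel hdc)
      · obtain ⟨t, ht, hwt⟩ := h.exists_ge_of_transfer_prefix (σ := [d]) rfl hvu'
        exact List.cons_le_cons d (hwt.trans ht.le_maxShuffle)
    · exact List.cons_le_cons d h.le_maxShuffle
termination_by u v => u.length + v.length

theorem eq_maxShuffle_of_forall_le {u v w : List α} (hw : IsShuffle u v w)
    (hmax : ∀ w', IsShuffle u v w' → w' ≤ w) : w = maxShuffle u v :=
  le_antisymm hw.le_maxShuffle (hmax _ (isShuffle_maxShuffle u v))

theorem maxShuffle_append_of_forall_suffix {v A : List α} :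
    ∀ {p : List α}, (∀ s, s ≠ [] → s <:+ p → v ≤ s ++ A) →
      maxShuffle (p ++ A) v = p ++ maxShuffle A v
  | [], _ => rfl
  | c :: p, hs => by
    cases v with
    | nil => simp
    | cons d v =>
      have hle : d :: v ≤ c :: (p ++ A) := hs (c :: p) (List.cons_ne_nil c p) (List.suffix_refl _)
      rw [List.cons_append, maxShuffle_cons_cons, if_pos hle,
        maxShuffle_append_of_forall_suffix fun s hne hsuf =>
          hs s hne (hsuf.trans (List.suffix_cons c p))]
      rfl

theorem flatten_lt_cons_of_forall_le {a b : α} {q : List α} (hab : a < b) {G : List (List α)}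
    (hG : ∀ u ∈ G, u ≤ a :: q) (r : List α) : G.flatten < b :: r := by
  induction G with
  | nil => exact List.nil_lt_cons b r
  | cons u G ih =>
    rw [List.forall_mem_cons] at hG
    cases u with
    | nil => simpa using ih hG.2
    | cons c u =>
      have hca : c ≤ a := (cons_le_cons_iff_lex.mp hG.1).elim le_of_lt fun h => h.1.le
      exact List.Lex.rel (hca.trans_lt hab)

theorem flatten_le_cons_append {a : α} {q y : List α} (hy : ∀ b ∈ y, a < b)
    (hqy : a :: q < a :: y) {G : List (List α)} (hG : ∀ u ∈ G, u ≤ a :: q) (A : List α) :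
    G.flatten ≤ a :: y ++ A := by
  induction G with
  | nil => exact (List.nil_lt_cons a _).le
  | cons u G ih =>
    rw [List.forall_mem_cons] at hG
    cases u with
    | nil => simpa using ih hG.2
    | cons c u =>
      have hu : c :: u < a :: y := hG.1.trans_lt hqy
      refine append_le_append_of_lt hu fun r hr => ?_
      cases r with
      | nil => exact absurd hu (by rw [hr, List.append_nil]; exact lt_irrefl _)
      | cons b r =>
        rw [List.cons_append, List.cons_eq_cons] at hr
        have hb : b ∈ y := hr.2 ▸ List.mem_append_right u List.mem_cons_self
        exact (flatten_lt_cons_of_forall_le (hy b hb) hG.2 _).le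

theorem eq_or_lt_head_of_suffix {a : α} {x y r : List α} (hx : ∀ b ∈ x, a < b)
    (hy : ∀ b ∈ y, a < b) (hr : r <:+ x ++ a :: y) (hne : r ≠ []) :
    r = a :: y ∨ ∃ b r', r = b :: r' ∧ a < b := by
  obtain ⟨c, r, rfl⟩ := List.exists_cons_of_ne_nil hne
  obtain ⟨t, ht⟩ := hr
  rcases eq_or_ne c a with rfl | hca
  · left
    have hcx : c ∉ x := fun h => lt_irrefl c (hx c h)
    have hcy : c ∉ y := fun h => lt_irrefl c (hy c h)
    obtain ⟨-, -, rfl⟩ := (List.append_cons_inj_of_notMem hcx hcy).mp ht.symm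
    rfl
  · right
    have hc : c ∈ x ++ a :: y := ht ▸ List.mem_append_right t List.mem_cons_self
    refine ⟨c, r, rfl, ?_⟩
    simp only [List.mem_append, List.mem_cons] at hc
    rcases hc with hc | rfl | hc
    · exact hx c hc
    · exact absurd rfl hca
    · exact hy c hc

theorem flatten_le_append_of_suffix {a : α} {x y q r : List α} (hx : ∀ b ∈ x, a < b)
    (hy : ∀ b ∈ y, a < b) (hqy : a :: q < a :: y) {G : List (List α)}
    (hG : ∀ u ∈ G, u ≤ a :: q) (A : List α) (hr : r <:+ x ++ a :: y) (hne : r ≠ []) :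
    G.flatten ≤ r ++ A := by
  rcases eq_or_lt_head_of_suffix hx hy hr hne with rfl | ⟨b, r, rfl, hab⟩
  · exact flatten_le_cons_append hy hqy hG A
  · exact (flatten_lt_cons_of_forall_le hab hG _).le

namespace IsLyndon

theorem lt_of_suffix_of_length_lt {u v : List α} (h : IsLyndon u) (hv : v ≠ []) (hvu : v <:+ u)
    (hlen : v.length < u.length) : u < v :=
  h.2 v hv (by rintro rfl; exact lt_irrefl _ hlen) hvu

theorem head_le {a b : α} {t : List α} (h : IsLyndon (a :: t)) (hb : b ∈ t) : a ≤ b := by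
  obtain ⟨p, z, rfl⟩ := List.append_of_mem hb
  exact List.head_le_of_lt
    (h.lt_of_suffix_of_length_lt (List.cons_ne_nil b z) ⟨a :: p, by simp⟩ (by simp))

theorem cons_append_flatten_le_suffix_append {a : α} {x y q : List α} {G : List (List α)}
    (hi : IsLyndon (a :: (x ++ a :: y))) (hx : a ∉ x) (hy : a ∉ y)
    (hji : a :: q < a :: (x ++ a :: y)) (hG : ∀ u ∈ G, u ≤ a :: q) (A : List α)
    {s : List α} (hs : s <:+ a :: (x ++ a :: y)) (hne : s ≠ []) :
    a :: q ++ G.flatten ≤ s ++ A := by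
  have hx' : ∀ b ∈ x, a < b := fun b hb =>
    (hi.head_le (by simp [hb])).lt_of_ne (by rintro rfl; exact hx hb)
  have hy' : ∀ b ∈ y, a < b := fun b hb =>
    (hi.head_le (by simp [hb])).lt_of_ne (by rintro rfl; exact hy hb)
  have hqy : a :: q < a :: y :=
    hji.trans (hi.lt_of_suffix_of_length_lt (List.cons_ne_nil a y) ⟨a :: x, by simp⟩ (by simp))
  rcases List.suffix_cons_iff.mp hs with rfl | hs
  · refine append_le_append_of_lt hji fun r hr => ?_
    rw [List.cons_append, List.cons_eq_cons] at hr
    refine flatten_le_append_of_suffix hx' hy' hqy hG A ⟨q, hr.2.symm⟩ ?_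
    rintro rfl
    rw [List.append_nil] at hr
    exact hji.ne (by rw [hr.2])
  · simpa only [List.flatten_cons] using flatten_le_append_of_suffix hx' hy' hqy
      (G := (a :: q) :: G) (List.forall_mem_cons.mpr ⟨le_rfl, hG⟩) A hs hne

end IsLyndon

end LinearOrder

end

theorem stmt2_general {α : Type*} [LinearOrder α]
    (i₁ : List α) (itl : List (List α)) (j₁ : List α) (jtl : List (List α))
    (hLI : ∀ u ∈ i₁ :: itl, IsLyndon u)
    (hdecJ : List.Chain' (fun u v : List α => v ≤ u) (j₁ :: jtl))
    (hi : i₁ ≠ []) (hj : j₁ ≠ [])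
    (hij : j₁ ≤ i₁)
    (hhead : i₁.head hi = j₁.head hj)
    (hcounti : List.count (i₁.head hi) i₁ = 2)
    (hcountj : List.count (i₁.head hi) j₁ = 1)
    (w : List α)
    (hshuf : IsShuffle ((i₁ :: itl).flatten) ((j₁ :: jtl).flatten) w)
    (hgreatest : ∀ w', IsShuffle ((i₁ :: itl).flatten) ((j₁ :: jtl).flatten) w' → w' ≤ w) :
    ∃ w', IsShuffle itl.flatten ((j₁ :: jtl).flatten) w' ∧ w = i₁ ++ w' := by
  have hw := eq_maxShuffle_of_forall_le hshuf hgreatest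
  have hG : ∀ u ∈ jtl, u ≤ j₁ := (List.pairwise_cons.mp hdecJ.pairwise).1
  generalize ha : i₁.head hi = a at hhead hcounti hcountj
  obtain ⟨t, rfl⟩ : ∃ t, i₁ = a :: t := ⟨i₁.tail, by rw [← ha, List.cons_head_tail]⟩
  obtain ⟨q, rfl⟩ : ∃ q, j₁ = a :: q := ⟨j₁.tail, by rw [hhead, List.cons_head_tail]⟩
  obtain ⟨x, y, rfl, hx, hy⟩ :=
    exists_eq_append_cons_of_count_eq_one (by simpa using hcounti : t.count a = 1)
  have hji : a :: q < a :: (x ++ a :: y) := hij.lt_of_ne (by rintro h; rw [h] at hcountj; omega)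
  refine ⟨_, isShuffle_maxShuffle _ _, hw.trans (maxShuffle_append_of_forall_suffix ?_)⟩
  exact fun s hne hs =>
    (hLI _ List.mem_cons_self).cons_append_flatten_le_suffix_append hx hy hji hG _ hs hne

/-- with `i₁ ≥ j₁`, equal first letters `a`, `a` occurring exactly twice in `i₁`
and exactly once in `j₁`, the lexicographically greatest shuffle `w` of `μ = i₁ ⋯ i_r` and
`ν = j₁ ⋯ j_s` has the form `w = i₁ ++ w'` with `w'` a shuffle of `i₂ ⋯ i_r` and `ν`. -/
theorem stmt2 {α : Type*} [LinearOrder α]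
    (i₁ : List α) (itl : List (List α)) (j₁ : List α) (jtl : List (List α))
    (hLI : ∀ u ∈ i₁ :: itl, IsLyndon u)
    (hLJ : ∀ u ∈ j₁ :: jtl, IsLyndon u)
    (hdecI : List.Chain' (fun u v : List α => v ≤ u) (i₁ :: itl))
    (hdecJ : List.Chain' (fun u v : List α => v ≤ u) (j₁ :: jtl))
    (hi : i₁ ≠ []) (hj : j₁ ≠ [])
    (hij : j₁ ≤ i₁)
    (hhead : i₁.head hi = j₁.head hj)
    (hcounti : List.count (i₁.head hi) i₁ = 2)
    (hcountj : List.count (i₁.head hi) j₁ = 1)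
    (w : List α)
    (hshuf : IsShuffle ((i₁ :: itl).flatten) ((j₁ :: jtl).flatten) w)
    (hgreatest : ∀ w', IsShuffle ((i₁ :: itl).flatten) ((j₁ :: jtl).flatten) w' → w' ≤ w) :
    ∃ w', IsShuffle itl.flatten ((j₁ :: jtl).flatten) w' ∧ w = i₁ ++ w' :=
  stmt2_general i₁ itl j₁ jtl hLI hdecJ hi hj hij hhead hcounti hcountj w hshuf hgreatest
end

section
/- Let k be a field and N ≥ 1. Order ℕ^N (and ℤ^N) by the reversed lexicographic order: a < b if and only if at the largest index where a and b differ, the entry of a is smaller than that of b. Let A be a commutative k-algebra which is free as a k-module with basis (b_m)_{m ∈ ℕ^N}, with b_0 = 1, and assume that for all m, n ∈ ℕ^N the element b_m·b_n − b_{m+n} lies in the k-linear span of { b_p : p < m+n }. For a nonzero x ∈ A let Ψ(x) ∈ ℕ^N be the largest m ∈ ℕ^N whose coefficient in the basis expansion of x is nonzero. Then: (1) A is an integral domain; (2) Ψ(xy) = Ψ(x) + Ψ(y) for all nonzero x, y ∈ A; (3) Ψ(x+y) ≤ max(Ψ(x), Ψ(y)) whenever x, y and x+y are all nonzero. -/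
/-- The (strict) reversed lexicographic order on `ℕ^N` (and `ℤ^N`): `a < b` iff at the
largest index where `a` and `b` differ, the entry of `a` is smaller than that of `b`. -/
def RevLex {N : ℕ} {R : Type*} [LT R] (a b : Fin N → R) : Prop :=
  ∃ i : Fin N, a i < b i ∧ ∀ j : Fin N, i < j → a j = b j

/-! The leading index `Ψ` plays the role of a degree. Since the reversed lexicographic order is
compatible with addition, the defining condition on `B m * B n` shows that the product of two
elements with leading terms `c • B m` and `d • B n` has leading term `(c * d) • B (m + n)`, and
`c * d ≠ 0` because `k` is a field. This gives the additivity of `Ψ` and, with it, the absence of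
zero divisors; the bound on `Ψ (x + y)` holds because a coefficient of `x + y` can only be nonzero
where a coefficient of `x` or of `y` is. -/

namespace RevLex

variable {N : ℕ} {R : Type*}

theorem irrefl [Preorder R] (a : Fin N → R) : ¬ RevLex a a :=
  fun ⟨_, hi, _⟩ => lt_irrefl _ hi

theorem trans [Preorder R] {a b c : Fin N → R} (hab : RevLex a b) (hbc : RevLex b c) :
    RevLex a c := by
  obtain ⟨i, hi, hai⟩ := hab
  obtain ⟨j, hj, hbj⟩ := hbc
  rcases lt_trichotomy i j with h | rfl | h
  · exact ⟨j, (hai j h).trans_lt hj, fun l hl => (hai l (h.trans hl)).trans (hbj l hl)⟩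
  · exact ⟨i, hi.trans hj, fun l hl => (hai l hl).trans (hbj l hl)⟩
  · exact ⟨i, hi.trans_eq (hbj i h), fun l hl => (hai l hl).trans (hbj l (h.trans hl))⟩

theorem add_right [Add R] [Preorder R] [AddRightStrictMono R] {a b : Fin N → R}
    (h : RevLex a b) (c : Fin N → R) : RevLex (a + c) (b + c) := by
  obtain ⟨i, hi, hai⟩ := h
  exact ⟨i, add_lt_add_left hi (c i), fun j hj => congrArg (· + c j) (hai j hj)⟩

theorem add_left [Add R] [Preorder R] [AddLeftStrictMono R] {a b : Fin N → R}
    (h : RevLex a b) (c : Fin N → R) : RevLex (c + a) (c + b) := by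
  obtain ⟨i, hi, hai⟩ := h
  exact ⟨i, add_lt_add_right hi (c i), fun j hj => congrArg (c j + ·) (hai j hj)⟩

theorem add_of_eq_or_of_lt [Add R] [Preorder R] [AddLeftStrictMono R] [AddRightStrictMono R]
    {a b p q : Fin N → R} (hp : p = a ∨ RevLex p a) (hq : RevLex q b) :
    RevLex (p + q) (a + b) := by
  rcases hp with rfl | hp
  · exact hq.add_left p
  · exact (hq.add_left p).trans (hp.add_right b)

end RevLex

section LeadingIndex

variable {k A : Type*} [CommRing k] [CommRing A] [Algebra k A] {N : ℕ}
  (B : Module.Basis (Fin N → ℕ) k A)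

def spanBelow (t : Fin N → ℕ) : Submodule k A :=
  Submodule.span k (B '' {p | RevLex p t})

def spanAtMost (t : Fin N → ℕ) : Submodule k A :=
  Submodule.span k (B '' {p | p = t ∨ RevLex p t})

def IsLeadingIndex (x : A) (m : Fin N → ℕ) : Prop :=
  B.repr x m ≠ 0 ∧ ∀ p, B.repr x p ≠ 0 → p = m ∨ RevLex p m

variable {B}

theorem mem_spanBelow_iff {x : A} {t : Fin N → ℕ} :
    x ∈ spanBelow B t ↔ ∀ p, B.repr x p ≠ 0 → RevLex p t := by
  simp only [spanBelow, Module.Basis.mem_span_image, Set.subset_def, Finset.mem_coe,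
    Finsupp.mem_support_iff, Set.mem_ofPred_eq]

theorem mem_spanAtMost_iff {x : A} {t : Fin N → ℕ} :
    x ∈ spanAtMost B t ↔ ∀ p, B.repr x p ≠ 0 → p = t ∨ RevLex p t := by
  simp only [spanAtMost, Module.Basis.mem_span_image, Set.subset_def, Finset.mem_coe,
    Finsupp.mem_support_iff, Set.mem_ofPred_eq]

theorem span_setOf_revLex_eq_spanBelow (t : Fin N → ℕ) :
    Submodule.span k {x : A | ∃ p, RevLex p t ∧ x = B p} = spanBelow B t := by
  simp only [spanBelow, Set.image, Set.mem_ofPred_eq, eq_comm]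

namespace IsLeadingIndex

variable {x y : A} {m n : Fin N → ℕ}

theorem ne_zero (hx : IsLeadingIndex B x m) : x ≠ 0 := by
  rintro rfl
  exact hx.1 (by simp)

theorem unique (hm : IsLeadingIndex B x m) (hn : IsLeadingIndex B x n) : m = n := by
  rcases hn.2 m hm.1 with h | hmn
  · exact h
  rcases hm.2 n hn.1 with h | hnm
  · exact h.symm
  · exact absurd (hmn.trans hnm) (RevLex.irrefl m)

theorem mem_spanAtMost (hx : IsLeadingIndex B x m) : x ∈ spanAtMost B m :=
  mem_spanAtMost_iff.mpr hx.2

theorem sub_leading_mem_spanBelow (hx : IsLeadingIndex B x m) :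
    x - B.repr x m • B m ∈ spanBelow B m := by
  refine mem_spanBelow_iff.mpr fun p hp => ?_
  by_cases hpm : p = m
  · subst hpm
    simp at hp
  · refine (hx.2 p fun h => hp ?_).resolve_left hpm
    simp [h, Finsupp.single_eq_of_ne hpm]

end IsLeadingIndex

theorem isLeadingIndex_of_sub_smul_mem_spanBelow {x : A} {m : Fin N → ℕ} {c : k} (hc : c ≠ 0)
    (hx : x - c • B m ∈ spanBelow B m) : IsLeadingIndex B x m := by
  have hlow := mem_spanBelow_iff.mp hx
  refine ⟨?_, fun p hp => ?_⟩
  · have hm : B.repr (x - c • B m) m = B.repr x m - c := by simp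
    have : B.repr (x - c • B m) m = 0 := by_contra fun h => RevLex.irrefl m (hlow m h)
    rw [hm, sub_eq_zero] at this
    rwa [this]
  · by_cases hpm : p = m
    · exact Or.inl hpm
    · have hp' : B.repr (x - c • B m) p = B.repr x p := by
        simp [Finsupp.single_eq_of_ne hpm]
      exact Or.inr (hlow p (hp' ▸ hp))

section Multiplicative

variable (hmul : ∀ m n, B m * B n - B (m + n) ∈ spanBelow B (m + n))
include hmul

theorem basis_mul_mem_spanBelow {a b p q : Fin N → ℕ} (hp : p = a ∨ RevLex p a)
    (hq : RevLex q b) : B p * B q ∈ spanBelow B (a + b) := by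
  have hpq := RevLex.add_of_eq_or_of_lt hp hq
  have hle : spanBelow B (p + q) ≤ spanBelow B (a + b) :=
    Submodule.span_mono (Set.image_mono fun r hr => hr.trans hpq)
  simpa using add_mem (hle (hmul p q)) (Submodule.subset_span ⟨p + q, hpq, rfl⟩)

theorem mul_mem_spanBelow {a b : Fin N → ℕ} {u v : A} (hu : u ∈ spanAtMost B a)
    (hv : v ∈ spanBelow B b) : u * v ∈ spanBelow B (a + b) := by
  have huv := Submodule.mul_mem_mul hu hv
  rw [spanAtMost, spanBelow, Submodule.span_mul_span] at huv
  refine Submodule.span_le.mpr ?_ huv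
  rintro _ ⟨_, ⟨p, hp, rfl⟩, _, ⟨q, hq, rfl⟩, rfl⟩
  exact basis_mul_mem_spanBelow hmul hp hq

theorem IsLeadingIndex.mul [NoZeroDivisors k] {x y : A} {m n : Fin N → ℕ}
    (hx : IsLeadingIndex B x m) (hy : IsLeadingIndex B y n) : IsLeadingIndex B (x * y) (m + n) := by
  set c := B.repr x m
  set d := B.repr y n
  have hdecomp : x * y - (c * d) • B (m + n) =
      (c * d) • (B m * B n - B (m + n)) + (c • B m) * (y - d • B n) + y * (x - c • B m) := by
    simp only [Algebra.smul_def, map_mul]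
    ring
  have htop := Submodule.smul_mem _ (c * d) (hmul m n)
  have hleft : (c • B m) * (y - d • B n) ∈ spanBelow B (m + n) :=
    mul_mem_spanBelow hmul (Submodule.smul_mem _ c (Submodule.subset_span ⟨m, Or.inl rfl, rfl⟩))
      hy.sub_leading_mem_spanBelow
  have hright : y * (x - c • B m) ∈ spanBelow B (m + n) := by
    rw [add_comm]
    exact mul_mem_spanBelow hmul hy.mem_spanAtMost hx.sub_leading_mem_spanBelow
  refine isLeadingIndex_of_sub_smul_mem_spanBelow (mul_ne_zero hx.1 hy.1) ?_
  rw [hdecomp]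
  exact add_mem (add_mem htop hleft) hright

end Multiplicative

end LeadingIndex

theorem stmt6_general {k : Type*} [Field k] {N : ℕ}
    {A : Type*} [CommRing A] [Algebra k A]
    (B : Module.Basis (Fin N → ℕ) k A) (hB1 : B 0 = 1)
    (hmul : ∀ m n : Fin N → ℕ,
      B m * B n - B (m + n) ∈
        Submodule.span k {x : A | ∃ p : Fin N → ℕ, RevLex p (m + n) ∧ x = B p})
    (Ψ : A → (Fin N → ℕ))
    (hΨ : ∀ x : A, x ≠ 0 →
      B.repr x (Ψ x) ≠ 0 ∧ ∀ m : Fin N → ℕ, B.repr x m ≠ 0 → m = Ψ x ∨ RevLex m (Ψ x)) :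
    IsDomain A ∧
    (∀ x y : A, x ≠ 0 → y ≠ 0 → Ψ (x * y) = Ψ x + Ψ y) ∧
    (∀ x y : A, x ≠ 0 → y ≠ 0 → x + y ≠ 0 →
      (Ψ (x + y) = Ψ x ∨ RevLex (Ψ (x + y)) (Ψ x)) ∨
      (Ψ (x + y) = Ψ y ∨ RevLex (Ψ (x + y)) (Ψ y))) := by
  have hmul' m n : B m * B n - B (m + n) ∈ spanBelow B (m + n) :=
    span_setOf_revLex_eq_spanBelow (B := B) (m + n) ▸ hmul m n
  have hlead {x y : A} (hx : x ≠ 0) (hy : y ≠ 0) : IsLeadingIndex B (x * y) (Ψ x + Ψ y) :=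
    IsLeadingIndex.mul hmul' (hΨ x hx) (hΨ y hy)
  have : Nontrivial A := ⟨⟨1, 0, hB1 ▸ B.ne_zero 0⟩⟩
  have : NoZeroDivisors A :=
    ⟨fun {x y} hxy => or_iff_not_and_not.mpr fun ⟨hx, hy⟩ => (hlead hx hy).ne_zero hxy⟩
  refine ⟨NoZeroDivisors.to_isDomain A, fun x y hx hy => ?_, fun x y hx hy hxy => ?_⟩
  · exact IsLeadingIndex.unique (hΨ _ (mul_ne_zero hx hy)) (hlead hx hy)
  · have : B.repr x (Ψ (x + y)) ≠ 0 ∨ B.repr y (Ψ (x + y)) ≠ 0 := by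
      by_contra! h
      exact (hΨ _ hxy).1 (by simp [h.1, h.2])
    exact this.imp ((hΨ x hx).2 _) ((hΨ y hy).2 _)

/-- let `A` be a commutative `k`-algebra, free as a `k`-module with a basis
`(B m)_{m ∈ ℕ^N}` such that `B 0 = 1` and `B m · B n − B (m+n)` lies in the span of the
basis vectors `B p` with `p <` (reversed lex) `m + n`.  For nonzero `x`, `Ψ x` is the
largest `m` (for the reversed lexicographic order) whose coefficient in `x` is nonzero.
Then `A` is an integral domain, `Ψ` is additive on products of nonzero elements, and
`Ψ (x + y) ≤ max (Ψ x) (Ψ y)`. -/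
theorem stmt6 {k : Type*} [Field k] {N : ℕ} (hN : 1 ≤ N)
    {A : Type*} [CommRing A] [Algebra k A]
    (B : Module.Basis (Fin N → ℕ) k A) (hB1 : B 0 = 1)
    (hmul : ∀ m n : Fin N → ℕ,
      B m * B n - B (m + n) ∈
        Submodule.span k {x : A | ∃ p : Fin N → ℕ, RevLex p (m + n) ∧ x = B p})
    (Ψ : A → (Fin N → ℕ))
    (hΨ : ∀ x : A, x ≠ 0 →
      B.repr x (Ψ x) ≠ 0 ∧ ∀ m : Fin N → ℕ, B.repr x m ≠ 0 → m = Ψ x ∨ RevLex m (Ψ x)) :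
    IsDomain A ∧
    (∀ x y : A, x ≠ 0 → y ≠ 0 → Ψ (x * y) = Ψ x + Ψ y) ∧
    (∀ x y : A, x ≠ 0 → y ≠ 0 → x + y ≠ 0 →
      (Ψ (x + y) = Ψ x ∨ RevLex (Ψ (x + y)) (Ψ x)) ∨
      (Ψ (x + y) = Ψ y ∨ RevLex (Ψ (x + y)) (Ψ y))) :=
  stmt6_general B hB1 hmul Ψ hΨ
end

section
/- Let k be a field and A a commutative k-algebra which is an integral domain, equipped with an ℕ-grading A = ⊕_{n∈ℕ} A_n by k-submodules satisfying A_n·A_m ⊆ A_{n+m} and A_0 = k·1. Let ℤ^N carry a translation-invariant linear order and let Ψ be a valuation on A with values in ℤ^N. Let b₁, …, b_r ∈ A be nonzero homogeneous elements of degrees d₁, …, d_r ≥ 1 such that the vectors Ψ(b₁), …, Ψ(b_r) are linearly independent in ℚ^N. Let B be the k-subalgebra of A generated by b₁, …, b_r and set B_n := B ∩ A_n. Then the Newton–Okounkov body Δ(B), defined as the closure in ℝ^N of the convex hull of ⋃_{n≥1} { (1/n)·Ψ(f) : f ∈ B_n, f ≠ 0 }, equals the convex hull of the finite set { (1/d_i)·Ψ(b_i)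 : 1 ≤ i ≤ r }. In particular Δ(B) is a rational polytope. -/
/-!
A nonzero `f ∈ B ∩ A_n` is a `k`-linear combination of monomials `b^α`, and by homogeneity only
the monomials of degree `∑ αᵢ dᵢ = n` contribute. Their values `∑ αᵢ Ψ(bᵢ)` are pairwise distinct
by linear independence, so the ultrametric inequality forces `Ψ(f)` to be one of them. Hence
`Ψ(f) / n = ∑ (αᵢ dᵢ / n) • (Ψ(bᵢ) / dᵢ)` is a convex combination of the points `Ψ(bᵢ) / dᵢ`,
which themselves come from `f = bᵢ`; a convex hull of finitely many points is already closed.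
-/

open Finset

theorem DirectSum.sum_filter_eq_of_mem {ι σ α A : Type*} [DecidableEq ι] [AddCommMonoid A]
    [SetLike σ A] [AddSubmonoidClass σ A] (𝒜 : ι → σ) [DirectSum.Decomposition 𝒜]
    {s : Finset α} {t : α → A} {w : α → ι} (ht : ∀ a ∈ s, t a ∈ 𝒜 (w a)) {n : ι}
    (hn : ∑ a ∈ s, t a ∈ 𝒜 n) : ∑ a ∈ s with w a = n, t a = ∑ a ∈ s, t a :=
  calc ∑ a ∈ s with w a = n, t a
      _ = ∑ a ∈ s, (DirectSum.decompose 𝒜 (t a) n : A) := by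
        rw [sum_filter]
        refine sum_congr rfl fun a ha => ?_
        split_ifs with h
        · rw [DirectSum.decompose_of_mem_same 𝒜 (h ▸ ht a ha)]
        · rw [DirectSum.decompose_of_mem_ne 𝒜 (ht a ha) h]
      _ = (DirectSum.decompose 𝒜 (∑ a ∈ s, t a) n : A) := by
        rw [DirectSum.decompose_sum, DFinsupp.finsetSum_apply, AddSubmonoidClass.coe_finsetSum]
      _ = ∑ a ∈ s, t a := DirectSum.decompose_of_mem_same 𝒜 hn

theorem LinearIndependent.injective_sum_nsmul_intCast {ι κ : Type*} [Fintype ι] {v : ι → κ → ℤ}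
    (hv : LinearIndependent ℚ fun i j => (v i j : ℚ)) :
    Function.Injective fun α : ι →₀ ℕ => ∑ i, α i • v i := by
  intro α β h
  ext i
  refine Nat.cast_injective (R := ℚ) (Fintype.linearIndependent_iffₛ.mp hv (α ·) (β ·) ?_ i)
  funext j
  simpa using congr_arg (fun x : κ → ℤ => (x j : ℚ)) h

theorem inv_smul_sum_nsmul_mem_convexHull {ι E : Type*} [Fintype ι] [AddCommGroup E] [Module ℝ E]
    (x : ι → E) (α d : ι → ℕ) (hd : ∀ i, d i ≠ 0) (hn : ∑ i, α i * d i ≠ 0) :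
    ((∑ i, α i * d i : ℕ) : ℝ)⁻¹ • ∑ i, α i • x i ∈
      convexHull ℝ (Set.range fun i => (d i : ℝ)⁻¹ • x i) := by
  set n : ℝ := ((∑ i, α i * d i : ℕ) : ℝ)
  have hn' : n ≠ 0 := Nat.cast_ne_zero.mpr hn
  have hweights : ∑ i, (α i * d i : ℝ) / n = 1 := by
    rw [← sum_div, div_eq_one_iff_eq hn']
    push_cast [n]; rfl
  convert (convex_convexHull ℝ _).sum_mem (fun i _ => by positivity) hweights
    fun i _ => subset_convexHull ℝ _ (Set.mem_range_self i) using 1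
  rw [smul_sum]
  refine sum_congr rfl fun i _ => ?_
  rw [smul_smul, ← Nat.cast_smul_eq_nsmul ℝ, smul_smul]
  congr 1
  field_simp [hd i]

structure IsValuation (k : Type*) {A Γ : Type*} [Field k] [Ring A] [Algebra k A] [Add Γ]
    (le : Γ → Γ → Prop) (Ψ : A → Γ) : Prop where
  map_mul : ∀ f g : A, f ≠ 0 → g ≠ 0 → Ψ (f * g) = Ψ f + Ψ g
  map_smul : ∀ c : k, c ≠ 0 → ∀ f : A, f ≠ 0 → Ψ (c • f) = Ψ f
  map_add : ∀ f g : A, f ≠ 0 → g ≠ 0 → f + g ≠ 0 → le (Ψ (f + g)) (Ψ f) ∨ le (Ψ (f + g)) (Ψ g)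

namespace IsValuation

variable {k A Γ : Type*} [Field k]

section Order

variable [Ring A] [Algebra k A] [Add Γ] {le : Γ → Γ → Prop} {Ψ : A → Γ}

theorem map_neg (hΨ : IsValuation k le Ψ) {f : A} (hf : f ≠ 0) : Ψ (-f) = Ψ f := by
  simpa using hΨ.map_smul (-1) (neg_ne_zero.mpr one_ne_zero) f hf

variable [IsTrans Γ le] [Std.Antisymm le]

theorem map_add_eq_left (hΨ : IsValuation k le Ψ) {f g : A} (hf : f ≠ 0) (hg : g ≠ 0)
    (hfg : f + g ≠ 0) (hle : le (Ψ g) (Ψ f)) (hne : Ψ g ≠ Ψ f) : Ψ (f + g) = Ψ f := by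
  apply Std.Antisymm.antisymm (r := le)
  · rcases hΨ.map_add f g hf hg hfg with h | h
    exacts [h, IsTrans.trans _ _ _ h hle]
  · have := hΨ.map_add (f + g) (-g) hfg (neg_ne_zero.mpr hg) (by simpa using hf)
    rw [add_neg_cancel_right, hΨ.map_neg hg] at this
    exact this.resolve_right fun h => hne (Std.Antisymm.antisymm (r := le) _ _ hle h)

variable [Std.Total le]

theorem exists_map_sum_eq (hΨ : IsValuation k le Ψ) {ι : Type*} (s : Finset ι) {t : ι → A}
    (ht : ∀ i ∈ s, t i ≠ 0) (hinj : Set.InjOn (Ψ ∘ t) s) (hs : ∑ i ∈ s, t i ≠ 0) :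
    ∃ i ∈ s, Ψ (∑ i ∈ s, t i) = Ψ (t i) := by
  classical
  induction s using Finset.induction_on with
  | empty => simp at hs
  | @insert a s ha ih =>
    rw [sum_insert ha] at hs ⊢
    by_cases hs0 : ∑ i ∈ s, t i = 0
    · exact ⟨a, mem_insert_self a s, by rw [hs0, add_zero]⟩
    obtain ⟨m, hm, hΨm⟩ := ih (fun i hi => ht i (mem_insert_of_mem hi))
      (hinj.mono (by simp)) hs0
    have hne : Ψ (t m) ≠ Ψ (t a) := fun h =>
      ne_of_mem_of_not_mem hm ha (hinj (mem_insert_of_mem hm) (mem_insert_self a s) h)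
    rcases Std.Total.total (r := le) (Ψ (∑ i ∈ s, t i)) (Ψ (t a)) with h | h
    · exact ⟨a, mem_insert_self a s, hΨ.map_add_eq_left (ht a (mem_insert_self a s)) hs0 hs h
        (hΨm ▸ hne)⟩
    · refine ⟨m, mem_insert_of_mem hm, ?_⟩
      rw [add_comm, hΨ.map_add_eq_left hs0 (ht a (mem_insert_self a s)) (by rwa [add_comm]) h
        (hΨm ▸ hne).symm, hΨm]

end Order

section Domain

variable [CommRing A] [IsDomain A] [Algebra k A] [AddCancelCommMonoid Γ] {le : Γ → Γ → Prop}
  {Ψ : A → Γ}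

theorem map_one (hΨ : IsValuation k le Ψ) : Ψ 1 = 0 := by
  simpa using hΨ.map_mul 1 1 one_ne_zero one_ne_zero

theorem map_pow (hΨ : IsValuation k le Ψ) {x : A} (hx : x ≠ 0) (n : ℕ) :
    Ψ (x ^ n) = n • Ψ x := by
  induction n with
  | zero => simp [hΨ.map_one]
  | succ n ih => rw [pow_succ, hΨ.map_mul _ _ (pow_ne_zero n hx) hx, ih, succ_nsmul]

theorem map_prod_pow (hΨ : IsValuation k le Ψ) {ι : Type*} (s : Finset ι) {g : ι → A}
    (hg : ∀ i ∈ s, g i ≠ 0) (n : ι → ℕ) : Ψ (∏ i ∈ s, g i ^ n i) = ∑ i ∈ s, n i • Ψ (g i) := by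
  classical
  induction s using Finset.induction_on with
  | empty => simp [hΨ.map_one]
  | @insert a s ha ih =>
    have hs : ∀ i ∈ s, g i ≠ 0 := fun i hi => hg i (mem_insert_of_mem hi)
    rw [prod_insert ha, sum_insert ha, hΨ.map_mul _ _ (pow_ne_zero _ (hg a (mem_insert_self a s)))
      (prod_ne_zero_iff.mpr fun i hi => pow_ne_zero _ (hs i hi)), ih hs,
      hΨ.map_pow (hg a (mem_insert_self a s))]

variable [IsTrans Γ le] [Std.Antisymm le] [Std.Total le]

theorem exists_exponent_of_homogeneous_mem_adjoin (hΨ : IsValuation k le Ψ)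
    (𝒜 : ℕ → Submodule k A) [GradedAlgebra 𝒜] {ι : Type*} [Fintype ι] {b : ι → A} {d : ι → ℕ}
    (hb0 : ∀ i, b i ≠ 0) (hbdeg : ∀ i, b i ∈ 𝒜 (d i))
    (hinj : Function.Injective fun α : ι →₀ ℕ => ∑ i, α i • Ψ (b i)) {n : ℕ} {f : A}
    (hfB : f ∈ Algebra.adjoin k (Set.range b)) (hfn : f ∈ 𝒜 n) (hf0 : f ≠ 0) :
    ∃ α : ι →₀ ℕ, ∑ i, α i * d i = n ∧ Ψ f = ∑ i, α i • Ψ (b i) := by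
  classical
  obtain ⟨p, rfl⟩ := (AlgHom.mem_range _).mp (Algebra.adjoin_range_eq_range_aeval k b ▸ hfB)
  set t : (ι →₀ ℕ) → A := fun α => p.coeff α • ∏ i, b i ^ α i
  have hf : MvPolynomial.aeval b p = ∑ α ∈ p.support, t α := by
    simp [t, MvPolynomial.aeval_def, MvPolynomial.eval₂_eq', Algebra.smul_def]
  have hΨt : ∀ α ∈ p.support, t α ≠ 0 ∧ Ψ (t α) = ∑ i, α i • Ψ (b i) := by
    intro α hα
    have hc := MvPolynomial.mem_support_iff.mp hα
    have hprod : ∏ i, b i ^ α i ≠ 0 := prod_ne_zero_iff.mpr fun i _ => pow_ne_zero _ (hb0 i)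
    exact ⟨smul_ne_zero hc hprod, by
      rw [hΨ.map_smul _ hc _ hprod, hΨ.map_prod_pow _ (fun i _ => hb0 i)]⟩
  have hinjOn : Set.InjOn (Ψ ∘ t) p.support := fun α hα β hβ h =>
    hinj <| by simpa only [Function.comp, (hΨt α hα).2, (hΨt β hβ).2] using h
  have htdeg : ∀ α, t α ∈ 𝒜 (∑ i, α i * d i) := fun α =>
    Submodule.smul_mem _ _ (by simpa using SetLike.prod_pow_mem_graded 𝒜 d b α fun i _ => hbdeg i)
  rw [hf, ← DirectSum.sum_filter_eq_of_mem 𝒜 (fun α _ => htdeg α) (hf ▸ hfn)] at hf0 ⊢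
  obtain ⟨α, hα, hΨα⟩ := hΨ.exists_map_sum_eq _ (fun α hα => (hΨt α (mem_filter.1 hα).1).1)
    (hinjOn.mono (filter_subset _ _)) hf0
  rw [mem_filter] at hα
  exact ⟨α, hα.2, hΨα.trans (hΨt α hα.1).2⟩

end Domain

end IsValuation

theorem stmt7_general {k A : Type*} [Field k] [CommRing A] [IsDomain A] [Algebra k A]
    {N : ℕ}
    (𝒜 : ℕ → Submodule k A) [GradedAlgebra 𝒜]
    (le : (Fin N → ℤ) → (Fin N → ℤ) → Prop)
    (hantisymm : ∀ a b, le a b → le b a → a = b)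
    (htrans : ∀ a b c, le a b → le b c → le a c)
    (htotal : ∀ a b, le a b ∨ le b a)
    (Ψ : A → (Fin N → ℤ))
    (hΨmul : ∀ f g : A, f ≠ 0 → g ≠ 0 → Ψ (f * g) = Ψ f + Ψ g)
    (hΨsmul : ∀ c : k, c ≠ 0 → ∀ f : A, f ≠ 0 → Ψ (c • f) = Ψ f)
    (hΨadd : ∀ f g : A, f ≠ 0 → g ≠ 0 → f + g ≠ 0 →
      le (Ψ (f + g)) (Ψ f) ∨ le (Ψ (f + g)) (Ψ g))
    (r : ℕ) (b : Fin r → A) (d : Fin r → ℕ)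
    (hb0 : ∀ i, b i ≠ 0) (hbdeg : ∀ i, b i ∈ 𝒜 (d i)) (hd : ∀ i, 1 ≤ d i)
    (hindep : LinearIndependent ℚ (fun i : Fin r => fun j : Fin N => ((Ψ (b i) j : ℚ)))) :
    closure (convexHull ℝ (⋃ n : ℕ, ⋃ (_ : 1 ≤ n),
      {y : Fin N → ℝ | ∃ f : A, f ∈ Algebra.adjoin k (Set.range b) ∧ f ∈ 𝒜 n ∧ f ≠ 0 ∧
        y = (n : ℝ)⁻¹ • fun j : Fin N => (Ψ f j : ℝ)})) =
    convexHull ℝ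
      {y : Fin N → ℝ | ∃ i : Fin r, y = ((d i : ℝ))⁻¹ • fun j : Fin N => (Ψ (b i) j : ℝ)} := by
  have : IsTrans _ le := ⟨htrans⟩
  have : Std.Antisymm le := ⟨hantisymm⟩
  have : Std.Total le := ⟨htotal⟩
  have hΨ : IsValuation k le Ψ := ⟨hΨmul, hΨsmul, hΨadd⟩
  let toReal : (Fin N → ℤ) →+ (Fin N → ℝ) := (Int.castAddHom ℝ).compLeft (Fin N)
  set P : Fin r → (Fin N → ℝ) := fun i => (d i : ℝ)⁻¹ • toReal (Ψ (b i))
  have hP : {y | ∃ i : Fin r, y = ((d i : ℝ))⁻¹ • fun j : Fin N => (Ψ (b i) j : ℝ)} =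
      Set.range P :=
    Set.ext fun _ => exists_congr fun _ => eq_comm
  have hval : ∀ n ≥ 1, ∀ f ∈ Algebra.adjoin k (Set.range b), f ∈ 𝒜 n → f ≠ 0 →
      (n : ℝ)⁻¹ • toReal (Ψ f) ∈ convexHull ℝ (Set.range P) := by
    intro n hn f hfB hfn hf0
    obtain ⟨α, rfl, hΨf⟩ := hΨ.exists_exponent_of_homogeneous_mem_adjoin 𝒜 hb0 hbdeg
      hindep.injective_sum_nsmul_intCast hfB hfn hf0
    rw [hΨf, map_sum]
    simp_rw [map_nsmul]
    exact inv_smul_sum_nsmul_mem_convexHull _ α d (fun i => Nat.one_le_iff_ne_zero.mp (hd i))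
      (by omega)
  rw [hP]
  apply subset_antisymm
  · refine closure_minimal (convexHull_min ?_ (convex_convexHull ℝ _))
      ((Set.finite_range P).isCompact_convexHull (𝕜 := ℝ)).isClosed
    simp only [Set.iUnion_subset_iff, Set.ofPred_subset]
    rintro n hn _ ⟨f, hfB, hfn, hf0, rfl⟩
    exact hval n hn f hfB hfn hf0
  · refine convexHull_min ?_ (convex_convexHull ℝ _).closure
    rintro _ ⟨i, rfl⟩
    exact subset_closure <| subset_convexHull ℝ _ <| Set.mem_iUnion₂.mpr
      ⟨d i, hd i, b i, Algebra.subset_adjoin ⟨i, rfl⟩, hbdeg i, hb0 i, rfl⟩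

/-- for an ℕ-graded commutative `k`-algebra domain `A` with `A₀ = k·1`, a
valuation `Ψ` on `A` with values in `ℤ^N` (equipped with a translation-invariant linear
order `le`), and nonzero homogeneous elements `b₁, …, b_r` of degrees `d₁, …, d_r ≥ 1` with
`Ψ(b₁), …, Ψ(b_r)` linearly independent over `ℚ`, the Newton–Okounkov body of the subalgebra
generated by the `bᵢ` equals the convex hull of the points `(1/dᵢ)·Ψ(bᵢ)`. -/
theorem stmt7 {k A : Type*} [Field k] [CommRing A] [IsDomain A] [Algebra k A]
    {N : ℕ} (hN : 1 ≤ N)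
    (𝒜 : ℕ → Submodule k A) [GradedAlgebra 𝒜]
    (h𝒜0 : 𝒜 0 = Submodule.span k {(1 : A)})
    (le : (Fin N → ℤ) → (Fin N → ℤ) → Prop)
    (hrefl : ∀ a, le a a)
    (hantisymm : ∀ a b, le a b → le b a → a = b)
    (htrans : ∀ a b c, le a b → le b c → le a c)
    (htotal : ∀ a b, le a b ∨ le b a)
    (haddinv : ∀ a b c, le a b → le (a + c) (b + c))
    (Ψ : A → (Fin N → ℤ))
    (hΨmul : ∀ f g : A, f ≠ 0 → g ≠ 0 → Ψ (f * g) = Ψ f + Ψ g)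
    (hΨsmul : ∀ c : k, c ≠ 0 → ∀ f : A, f ≠ 0 → Ψ (c • f) = Ψ f)
    (hΨadd : ∀ f g : A, f ≠ 0 → g ≠ 0 → f + g ≠ 0 →
      le (Ψ (f + g)) (Ψ f) ∨ le (Ψ (f + g)) (Ψ g))
    (r : ℕ) (b : Fin r → A) (d : Fin r → ℕ)
    (hb0 : ∀ i, b i ≠ 0) (hbdeg : ∀ i, b i ∈ 𝒜 (d i)) (hd : ∀ i, 1 ≤ d i)
    (hindep : LinearIndependent ℚ (fun i : Fin r => fun j : Fin N => ((Ψ (b i) j : ℚ)))) :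
    closure (convexHull ℝ (⋃ n : ℕ, ⋃ (_ : 1 ≤ n),
      {y : Fin N → ℝ | ∃ f : A, f ∈ Algebra.adjoin k (Set.range b) ∧ f ∈ 𝒜 n ∧ f ≠ 0 ∧
        y = (n : ℝ)⁻¹ • fun j : Fin N => (Ψ f j : ℝ)})) =
    convexHull ℝ
      {y : Fin N → ℝ | ∃ i : Fin r, y = ((d i : ℝ))⁻¹ • fun j : Fin N => (Ψ (b i) j : ℝ)} :=
  stmt7_general 𝒜 le hantisymm htrans htotal Ψ hΨmul hΨsmul hΨadd r b d hb0 hbdeg hd hindep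
end

section
/- Let k be a field, A a commutative k-algebra which is an integral domain, ℤ^N equipped with a translation-invariant linear order, and Ψ a valuation on A with values in ℤ^N. Let x₁, …, x_N, x′_k be nonzero elements of A and let b₁, …, b_N be integers such that x′_k · x_k = ∏_{i : b_i > 0} x_i^{b_i} + ∏_{i : b_i < 0} x_i^{−b_i} (empty products being 1). Assume v := Σ_{i=1}^N b_i·Ψ(x_i) ≠ 0, and set η := +1 if v > 0 and η := −1 otherwise. Then Ψ(x′_k) = −Ψ(x_k) + Σ_{i=1}^N [η·b_i]₊ · Ψ(x_i), where [x]₊ := max(x, 0). -/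
/-! Both monomials `P = ∏_{bᵢ>0} xᵢ^{bᵢ}` and `Q = ∏_{bᵢ<0} xᵢ^{−bᵢ}` are nonzero, with
`Ψ(P) − Ψ(Q) = v ≠ 0`. A valuation takes the strictly larger value on a sum of two terms with
distinct values, so `Ψ(x'ₖ) + Ψ(xₖ) = Ψ(P + Q)` is `Ψ(P)` when `v > 0` and `Ψ(Q)` otherwise. -/

namespace ValuationExchange

variable {A Γ : Type*} (Ψ : A → Γ)

section Multiplicative

variable [AddCommGroup Γ] [CommRing A] [IsDomain A]

theorem map_one_eq_zero (hΨmul : ∀ f g : A, f ≠ 0 → g ≠ 0 → Ψ (f * g) = Ψ f + Ψ g) :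
    Ψ 1 = 0 := by
  simpa using hΨmul 1 1 one_ne_zero one_ne_zero

theorem map_pow (hΨmul : ∀ f g : A, f ≠ 0 → g ≠ 0 → Ψ (f * g) = Ψ f + Ψ g)
    {y : A} (hy : y ≠ 0) (n : ℕ) : Ψ (y ^ n) = n • Ψ y := by
  induction n with
  | zero => simpa using map_one_eq_zero Ψ hΨmul
  | succ n ih => rw [pow_succ, hΨmul _ _ (pow_ne_zero _ hy) hy, ih, succ_nsmul]

theorem map_prod (hΨmul : ∀ f g : A, f ≠ 0 → g ≠ 0 → Ψ (f * g) = Ψ f + Ψ g)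
    {ι : Type*} (s : Finset ι) {g : ι → A} (hg : ∀ i ∈ s, g i ≠ 0) :
    Ψ (∏ i ∈ s, g i) = ∑ i ∈ s, Ψ (g i) := by
  induction s using Finset.cons_induction with
  | empty => simpa using map_one_eq_zero Ψ hΨmul
  | cons a s ha ih =>
    have hs : ∀ i ∈ s, g i ≠ 0 := fun i hi => hg i (Finset.mem_cons_of_mem hi)
    rw [Finset.prod_cons, Finset.sum_cons,
      hΨmul _ _ (hg a (Finset.mem_cons_self a s)) (Finset.prod_ne_zero_iff.2 hs), ih hs]

theorem map_prod_pow (hΨmul : ∀ f g : A, f ≠ 0 → g ≠ 0 → Ψ (f * g) = Ψ f + Ψ g)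
    {ι : Type*} (s : Finset ι) {x : ι → A} (hx : ∀ i ∈ s, x i ≠ 0) (n : ι → ℕ) :
    Ψ (∏ i ∈ s, x i ^ n i) = ∑ i ∈ s, n i • Ψ (x i) := by
  rw [map_prod Ψ hΨmul s fun i hi => pow_ne_zero _ (hx i hi)]
  exact Finset.sum_congr rfl fun i hi => map_pow Ψ hΨmul (hx i hi) (n i)

theorem map_prod_pow_toNat (hΨmul : ∀ f g : A, f ≠ 0 → g ≠ 0 → Ψ (f * g) = Ψ f + Ψ g)
    {ι : Type*} (s : Finset ι) {x : ι → A} (hx : ∀ i ∈ s, x i ≠ 0) (n : ι → ℤ) :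
    Ψ (∏ i ∈ s, x i ^ (n i).toNat) = ∑ i ∈ s, max (n i) 0 • Ψ (x i) := by
  simp_rw [map_prod_pow Ψ hΨmul s hx, ← natCast_zsmul, Int.toNat_eq_max]

end Multiplicative

section Ultrametric

variable {k : Type*} [Field k] [CommRing A] [Algebra k A] (le : Γ → Γ → Prop)

theorem map_neg (hΨsmul : ∀ c : k, c ≠ 0 → ∀ f : A, f ≠ 0 → Ψ (c • f) = Ψ f)
    {f : A} (hf : f ≠ 0) : Ψ (-f) = Ψ f := by
  rw [← neg_one_smul k f]
  exact hΨsmul (-1) (neg_ne_zero.2 one_ne_zero) f hf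

theorem map_add_eq_left (hantisymm : ∀ a b, le a b → le b a → a = b)
    (htrans : ∀ a b c, le a b → le b c → le a c)
    (hΨsmul : ∀ c : k, c ≠ 0 → ∀ f : A, f ≠ 0 → Ψ (c • f) = Ψ f)
    (hΨadd : ∀ f g : A, f ≠ 0 → g ≠ 0 → f + g ≠ 0 →
      le (Ψ (f + g)) (Ψ f) ∨ le (Ψ (f + g)) (Ψ g))
    {P Q : A} (hP : P ≠ 0) (hQ : Q ≠ 0) (hPQ : P + Q ≠ 0)
    (hle : le (Ψ Q) (Ψ P)) (hne : Ψ P ≠ Ψ Q) : Ψ (P + Q) = Ψ P := by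
  have hsum_le : le (Ψ (P + Q)) (Ψ P) :=
    (hΨadd P Q hP hQ hPQ).elim id fun h => htrans _ _ _ h hle
  -- apply the ultrametric inequality once more to `P = (P + Q) + (-Q)`
  have hP_le : le (Ψ P) (Ψ (P + Q)) := by
    have hPeq : P + Q + -Q = P := add_neg_cancel_right P Q
    have h := hΨadd (P + Q) (-Q) hPQ (neg_ne_zero.2 hQ) (by rwa [hPeq])
    rw [hPeq, map_neg Ψ hΨsmul hQ] at h
    exact h.resolve_right fun h => hne (hantisymm _ _ h hle)
  exact hantisymm _ _ hsum_le hP_le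

variable [AddCommGroup Γ] [IsDomain A]

theorem map_eq_of_mul_eq_add (hantisymm : ∀ a b, le a b → le b a → a = b)
    (htrans : ∀ a b c, le a b → le b c → le a c)
    (hΨmul : ∀ f g : A, f ≠ 0 → g ≠ 0 → Ψ (f * g) = Ψ f + Ψ g)
    (hΨsmul : ∀ c : k, c ≠ 0 → ∀ f : A, f ≠ 0 → Ψ (c • f) = Ψ f)
    (hΨadd : ∀ f g : A, f ≠ 0 → g ≠ 0 → f + g ≠ 0 →
      le (Ψ (f + g)) (Ψ f) ∨ le (Ψ (f + g)) (Ψ g))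
    {y y' P Q : A} (hy : y ≠ 0) (hy' : y' ≠ 0) (hP : P ≠ 0) (hQ : Q ≠ 0)
    (hexch : y' * y = P + Q) (hle : le (Ψ Q) (Ψ P)) (hne : Ψ P ≠ Ψ Q) :
    Ψ y' = -Ψ y + Ψ P := by
  have hPQ : P + Q ≠ 0 := hexch ▸ mul_ne_zero hy' hy
  have h := hΨmul y' y hy' hy
  rw [hexch, map_add_eq_left Ψ le hantisymm htrans hΨsmul hΨadd hP hQ hPQ hle hne] at h
  rw [h]
  abel

end Ultrametric

end ValuationExchange

open ValuationExchange

theorem ite_pos_pow_toNat {M : Type*} [Monoid M] (a : M) (n : ℤ) :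
    (if 0 < n then a ^ n.toNat else 1) = a ^ n.toNat := by
  split_ifs with h
  · rfl
  · rw [Int.toNat_of_nonpos (not_lt.1 h), pow_zero]

theorem stmt8_general {k A : Type*} [Field k] [CommRing A] [IsDomain A] [Algebra k A]
    {N : ℕ}
    (le : (Fin N → ℤ) → (Fin N → ℤ) → Prop)
    (hantisymm : ∀ a b, le a b → le b a → a = b)
    (htrans : ∀ a b c, le a b → le b c → le a c)
    (htotal : ∀ a b, le a b ∨ le b a)
    (haddinv : ∀ a b c, le a b → le (a + c) (b + c))
    (Ψ : A → (Fin N → ℤ))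
    (hΨmul : ∀ f g : A, f ≠ 0 → g ≠ 0 → Ψ (f * g) = Ψ f + Ψ g)
    (hΨsmul : ∀ c : k, c ≠ 0 → ∀ f : A, f ≠ 0 → Ψ (c • f) = Ψ f)
    (hΨadd : ∀ f g : A, f ≠ 0 → g ≠ 0 → f + g ≠ 0 →
      le (Ψ (f + g)) (Ψ f) ∨ le (Ψ (f + g)) (Ψ g))
    (x : Fin N → A) (x'k : A) (k₀ : Fin N)
    (hx : ∀ i, x i ≠ 0) (hx'k : x'k ≠ 0)
    (b : Fin N → ℤ)
    (hexch : x'k * x k₀ =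
      (∏ i : Fin N, if 0 < b i then x i ^ (b i).toNat else 1) +
      (∏ i : Fin N, if b i < 0 then x i ^ (-(b i)).toNat else 1))
    (hv : (∑ i : Fin N, b i • Ψ (x i)) ≠ 0) :
    (le 0 (∑ i : Fin N, b i • Ψ (x i)) →
       Ψ x'k = -Ψ (x k₀) + ∑ i : Fin N, (max (b i) 0) • Ψ (x i)) ∧
    (¬ le 0 (∑ i : Fin N, b i • Ψ (x i)) →
       Ψ x'k = -Ψ (x k₀) + ∑ i : Fin N, (max (-(b i)) 0) • Ψ (x i)) := by
  simp_rw [← neg_pos (α := ℤ), ite_pos_pow_toNat] at hexch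
  set P := ∏ i, x i ^ (b i).toNat
  set Q := ∏ i, x i ^ (-b i).toNat
  have hmonomial_ne : ∀ n : Fin N → ℤ, ∏ i, x i ^ (n i).toNat ≠ 0 := fun n =>
    Finset.prod_ne_zero_iff.2 fun i _ => pow_ne_zero _ (hx i)
  have hΨP : Ψ P = ∑ i, max (b i) 0 • Ψ (x i) := map_prod_pow_toNat Ψ hΨmul _ (fun i _ => hx i) _
  have hΨQ : Ψ Q = ∑ i, max (-b i) 0 • Ψ (x i) := map_prod_pow_toNat Ψ hΨmul _ (fun i _ => hx i) _
  have hv_eq : ∑ i, b i • Ψ (x i) = Ψ P - Ψ Q := by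
    rw [hΨP, hΨQ, ← Finset.sum_sub_distrib]
    exact Finset.sum_congr rfl fun i _ => by rw [← sub_smul, max_zero_sub_max_neg_zero_eq_self]
  have hne : Ψ P ≠ Ψ Q := sub_ne_zero.1 (hv_eq ▸ hv)
  rw [hv_eq, ← hΨP, ← hΨQ]
  refine ⟨fun hpos => ?_, fun hneg => ?_⟩
  · refine map_eq_of_mul_eq_add Ψ le hantisymm htrans hΨmul hΨsmul hΨadd (hx k₀) hx'k
      (hmonomial_ne _) (hmonomial_ne _) hexch ?_ hne
    simpa using haddinv _ _ (Ψ Q) hpos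
  · refine map_eq_of_mul_eq_add Ψ le hantisymm htrans hΨmul hΨsmul hΨadd (hx k₀) hx'k
      (hmonomial_ne _) (hmonomial_ne _) (hexch.trans (add_comm P Q)) ?_ hne.symm
    simpa using haddinv _ _ (Ψ Q) ((htotal _ _).resolve_left hneg)

/-- let `Ψ` be a valuation on a commutative `k`-algebra domain `A` with values
in `ℤ^N` equipped with a translation-invariant linear order `le`.  Given an exchange relation
`x'ₖ · xₖ = ∏_{bᵢ>0} xᵢ^{bᵢ} + ∏_{bᵢ<0} xᵢ^{−bᵢ}` with `v := Σ bᵢ·Ψ(xᵢ) ≠ 0`, and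
`η = +1` if `v > 0` (i.e. `le 0 v`), `η = −1` otherwise, one has
`Ψ(x'ₖ) = −Ψ(xₖ) + Σᵢ [η·bᵢ]₊ · Ψ(xᵢ)`. -/
theorem stmt8 {k A : Type*} [Field k] [CommRing A] [IsDomain A] [Algebra k A]
    {N : ℕ} (hN : 1 ≤ N)
    (le : (Fin N → ℤ) → (Fin N → ℤ) → Prop)
    (hrefl : ∀ a, le a a)
    (hantisymm : ∀ a b, le a b → le b a → a = b)
    (htrans : ∀ a b c, le a b → le b c → le a c)
    (htotal : ∀ a b, le a b ∨ le b a)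
    (haddinv : ∀ a b c, le a b → le (a + c) (b + c))
    (Ψ : A → (Fin N → ℤ))
    (hΨmul : ∀ f g : A, f ≠ 0 → g ≠ 0 → Ψ (f * g) = Ψ f + Ψ g)
    (hΨsmul : ∀ c : k, c ≠ 0 → ∀ f : A, f ≠ 0 → Ψ (c • f) = Ψ f)
    (hΨadd : ∀ f g : A, f ≠ 0 → g ≠ 0 → f + g ≠ 0 →
      le (Ψ (f + g)) (Ψ f) ∨ le (Ψ (f + g)) (Ψ g))
    (x : Fin N → A) (x'k : A) (k₀ : Fin N)
    (hx : ∀ i, x i ≠ 0) (hx'k : x'k ≠ 0)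
    (b : Fin N → ℤ)
    (hexch : x'k * x k₀ =
      (∏ i : Fin N, if 0 < b i then x i ^ (b i).toNat else 1) +
      (∏ i : Fin N, if b i < 0 then x i ^ (-(b i)).toNat else 1))
    (hv : (∑ i : Fin N, b i • Ψ (x i)) ≠ 0) :
    (le 0 (∑ i : Fin N, b i • Ψ (x i)) →
       Ψ x'k = -Ψ (x k₀) + ∑ i : Fin N, (max (b i) 0) • Ψ (x i)) ∧
    (¬ le 0 (∑ i : Fin N, b i • Ψ (x i)) →
       Ψ x'k = -Ψ (x k₀) + ∑ i : Fin N, (max (-(b i)) 0) • Ψ (x i)) :=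
  stmt8_general le hantisymm htrans htotal haddinv Ψ hΨmul hΨsmul hΨadd x x'k k₀ hx hx'k b hexch hv
end

section
/- Let K be a field, let ℤ^N carry a translation-invariant linear order, and let Ψ : K∖{0} → ℤ^N satisfy Ψ(fg) = Ψ(f) + Ψ(g) for all nonzero f, g and Ψ(f+g) ≤ max(Ψ(f), Ψ(g)) whenever f, g, f+g are all nonzero. Fix an index k ∈ {1,…,N}, nonzero elements ŷ₁, …, ŷ_N and ŷ′₁, …, ŷ′_N of K, and integers (b_{ij})_{1≤i,j≤N} with b_{jk} = −b_{kj} for all j. Assume: ŷ′_k = ŷ_k^{−1}; for every j ≠ k one has ŷ_k + 1 ≠ 0 and ŷ′_j = ŷ_j · ŷ_k^{[b_{kj}]₊} · (ŷ_k + 1)^{−b_{kj}}; and Ψ(ŷ_k) ≠ 0. Set η := +1 if Ψ(ŷ_k) > 0 and η := −1 otherwise. Then Ψ(ŷ′_k) = −Ψ(ŷ_k), and for every j ≠ k, Ψ(ŷ′_j) = Ψ(ŷ_j) + [η·b_{jk}]₊ · Ψ(ŷ_k), where [x]₊ := max(x, 0). -/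
/-!
Multiplicativity of `Ψ` reduces `Ψ(ŷ'ⱼ)` to `Ψ(ŷⱼ) + [b_{kj}]₊ Ψ(ŷₖ) - b_{kj} Ψ(ŷₖ + 1)`, so everything
hinges on `Ψ(ŷₖ + 1)`. Since `Ψ(1) = 0 ≠ Ψ(ŷₖ)`, the non-archimedean inequality becomes an equality
for the dominant summand: `Ψ(ŷₖ + 1) = Ψ(ŷₖ)` if `Ψ(ŷₖ) > 0` and `Ψ(ŷₖ + 1) = 0` otherwise. With
`c = b_{kj} = -b_{jk}`, the two cases then reduce to `[-c]₊ = [c]₊ - c`.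
-/

def IsLogarithmic {K G : Type*} [Field K] [AddCommGroup G] (Ψ : K → G) : Prop :=
  ∀ f g : K, f ≠ 0 → g ≠ 0 → Ψ (f * g) = Ψ f + Ψ g

namespace IsLogarithmic

variable {K G : Type*} [Field K] [AddCommGroup G] {Ψ : K → G}

theorem map_one (hΨ : IsLogarithmic Ψ) : Ψ 1 = 0 := by
  simpa using hΨ 1 1 one_ne_zero one_ne_zero

theorem map_inv (hΨ : IsLogarithmic Ψ) {f : K} (hf : f ≠ 0) : Ψ f⁻¹ = -Ψ f := by
  have h := hΨ f f⁻¹ hf (inv_ne_zero hf)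
  rw [mul_inv_cancel₀ hf, hΨ.map_one] at h
  exact (neg_eq_of_add_eq_zero_right h.symm).symm

theorem map_zpow (hΨ : IsLogarithmic Ψ) {f : K} (hf : f ≠ 0) (n : ℤ) :
    Ψ (f ^ n) = n • Ψ f := by
  induction n using Int.induction_on with
  | zero => simpa using hΨ.map_one
  | succ i ih =>
    rw [zpow_add_one₀ hf, hΨ _ _ (zpow_ne_zero _ hf) hf, ih, add_smul, one_smul]
  | pred i ih =>
    rw [zpow_sub_one₀ hf, hΨ _ _ (zpow_ne_zero _ hf) (inv_ne_zero hf), ih, hΨ.map_inv hf,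
      sub_smul, one_smul, sub_eq_add_neg]

theorem map_neg [IsAddTorsionFree G] (hΨ : IsLogarithmic Ψ) {f : K} (hf : f ≠ 0) :
    Ψ (-f) = Ψ f := by
  have hm1 : Ψ (-1 : K) = 0 := by
    have h := hΨ (-1) (-1) (neg_ne_zero.mpr one_ne_zero) (neg_ne_zero.mpr one_ne_zero)
    rw [neg_mul_neg, one_mul, hΨ.map_one, ← two_nsmul] at h
    exact nsmul_right_injective two_ne_zero (h.symm.trans (nsmul_zero 2).symm)
  rw [neg_eq_neg_one_mul, hΨ _ _ (neg_ne_zero.mpr one_ne_zero) hf, hm1, zero_add]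

theorem map_mul_zpow_mul_zpow (hΨ : IsLogarithmic Ψ) {u x z : K} (hu : u ≠ 0) (hx : x ≠ 0)
    (hz : z ≠ 0) (m n : ℤ) : Ψ (u * x ^ m * z ^ n) = Ψ u + m • Ψ x + n • Ψ z := by
  rw [hΨ _ _ (mul_ne_zero hu (zpow_ne_zero _ hx)) (zpow_ne_zero _ hz),
    hΨ _ _ hu (zpow_ne_zero _ hx), hΨ.map_zpow hx, hΨ.map_zpow hz]

section Nonarchimedean

variable [IsAddTorsionFree G] {r : G → G → Prop}

theorem map_add_of_ne_of_le [IsTrans G r] [Std.Antisymm r] (hΨ : IsLogarithmic Ψ)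
    (hΨadd : ∀ f g : K, f ≠ 0 → g ≠ 0 → f + g ≠ 0 → r (Ψ (f + g)) (Ψ f) ∨ r (Ψ (f + g)) (Ψ g))
    {f g : K} (hf : f ≠ 0) (hg : g ≠ 0) (hfg : f + g ≠ 0) (hne : Ψ g ≠ Ψ f)
    (hle : r (Ψ g) (Ψ f)) : Ψ (f + g) = Ψ f := by
  have h_le : r (Ψ (f + g)) (Ψ f) :=
    (hΨadd f g hf hg hfg).elim id fun h ↦ trans_of r h hle
  -- `f = (f + g) + (-g)` with `Ψ (-g) = Ψ g`; the branch bounding by `Ψ g` would force `Ψ f = Ψ g`.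
  have h_ge : r (Ψ f) (Ψ (f + g)) := by
    have hsum : f + g + -g = f := add_neg_cancel_right f g
    rcases hΨadd (f + g) (-g) hfg (neg_ne_zero.mpr hg) (hsum.symm ▸ hf) with h | h
    · rwa [hsum] at h
    · rw [hsum, hΨ.map_neg hg] at h
      exact absurd (antisymm h hle).symm hne
  exact antisymm h_le h_ge

theorem map_add_one_of_nonneg [IsTrans G r] [Std.Antisymm r] (hΨ : IsLogarithmic Ψ)
    (hΨadd : ∀ f g : K, f ≠ 0 → g ≠ 0 → f + g ≠ 0 → r (Ψ (f + g)) (Ψ f) ∨ r (Ψ (f + g)) (Ψ g))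
    {x : K} (hx : x ≠ 0) (hx1 : x + 1 ≠ 0) (hΨx : Ψ x ≠ 0) (hpos : r 0 (Ψ x)) : Ψ (x + 1) = Ψ x :=
  hΨ.map_add_of_ne_of_le hΨadd hx one_ne_zero hx1 (hΨ.map_one ▸ hΨx.symm) (hΨ.map_one ▸ hpos)

theorem map_add_one_of_not_nonneg [IsTrans G r] [Std.Antisymm r] [Std.Total r]
    (hΨ : IsLogarithmic Ψ)
    (hΨadd : ∀ f g : K, f ≠ 0 → g ≠ 0 → f + g ≠ 0 → r (Ψ (f + g)) (Ψ f) ∨ r (Ψ (f + g)) (Ψ g))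
    {x : K} (hx : x ≠ 0) (hx1 : x + 1 ≠ 0) (hneg : ¬ r 0 (Ψ x)) : Ψ (x + 1) = 0 := by
  have hle : r (Ψ x) 0 := (total_of r 0 (Ψ x)).resolve_left hneg
  have hΨx : Ψ x ≠ 0 := fun h ↦ hneg (h ▸ hle)
  rw [add_comm, ← hΨ.map_one]
  exact hΨ.map_add_of_ne_of_le hΨadd one_ne_zero hx (add_comm x 1 ▸ hx1)
    (hΨ.map_one ▸ hΨx) (hΨ.map_one ▸ hle)

end Nonarchimedean

end IsLogarithmic

theorem stmt9_general {K : Type*} [Field K] {N : ℕ}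
    (le : (Fin N → ℤ) → (Fin N → ℤ) → Prop)
    (hantisymm : ∀ a b, le a b → le b a → a = b)
    (htrans : ∀ a b c, le a b → le b c → le a c)
    (htotal : ∀ a b, le a b ∨ le b a)
    (Ψ : K → (Fin N → ℤ))
    (hΨmul : ∀ f g : K, f ≠ 0 → g ≠ 0 → Ψ (f * g) = Ψ f + Ψ g)
    (hΨadd : ∀ f g : K, f ≠ 0 → g ≠ 0 → f + g ≠ 0 →
      le (Ψ (f + g)) (Ψ f) ∨ le (Ψ (f + g)) (Ψ g))
    (k₀ : Fin N) (y y' : Fin N → K)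
    (hy : ∀ j, y j ≠ 0)
    (b : Fin N → Fin N → ℤ) (hskew : ∀ j, b j k₀ = - b k₀ j)
    (h'k : y' k₀ = (y k₀)⁻¹)
    (h'j : ∀ j, j ≠ k₀ → y k₀ + 1 ≠ 0 ∧
      y' j = y j * y k₀ ^ (max (b k₀ j) 0) * (y k₀ + 1) ^ (-(b k₀ j)))
    (hΨk : Ψ (y k₀) ≠ 0) :
    Ψ (y' k₀) = - Ψ (y k₀) ∧
    ∀ j, j ≠ k₀ →
      (le 0 (Ψ (y k₀)) → Ψ (y' j) = Ψ (y j) + (max (b j k₀) 0) • Ψ (y k₀)) ∧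
      (¬ le 0 (Ψ (y k₀)) → Ψ (y' j) = Ψ (y j) + (max (-(b j k₀)) 0) • Ψ (y k₀)) := by
  have hΨ : IsLogarithmic Ψ := hΨmul
  have : IsTrans _ le := ⟨htrans⟩
  have : Std.Antisymm le := ⟨hantisymm⟩
  have : Std.Total le := ⟨htotal⟩
  refine ⟨by rw [h'k, hΨ.map_inv (hy k₀)], fun j hj ↦ ?_⟩
  obtain ⟨hk1, hy'j⟩ := h'j j hj
  have hΨy'j := hΨ.map_mul_zpow_mul_zpow (hy j) (hy k₀) hk1 (max (b k₀ j) 0) (-b k₀ j)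
  rw [← hy'j] at hΨy'j
  rw [hΨy'j, hskew j]
  constructor
  · intro hpos
    rw [hΨ.map_add_one_of_nonneg hΨadd (hy k₀) hk1 hΨk hpos, add_assoc, ← add_smul]
    congr 2
    omega
  · intro hneg
    rw [hΨ.map_add_one_of_not_nonneg hΨadd (hy k₀) hk1 hneg, smul_zero, add_zero, neg_neg]

/-- tropical mutation of the vectors `Ψ(ŷⱼ)`.  Here `Ψ : K∖{0} → ℤ^N` is
additive on products and satisfies the non-archimedean inequality for the translation-
invariant linear order `le` on `ℤ^N`.  Given `ŷ'ₖ = ŷₖ⁻¹` and, for `j ≠ k`,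
`ŷ'ⱼ = ŷⱼ · ŷₖ^{[b_{kj}]₊} · (ŷₖ+1)^{−b_{kj}}`, with `Ψ(ŷₖ) ≠ 0` and
`η = +1` if `Ψ(ŷₖ) > 0` (i.e. `le 0 (Ψ ŷₖ)`), `η = −1` otherwise, one has
`Ψ(ŷ'ₖ) = −Ψ(ŷₖ)` and `Ψ(ŷ'ⱼ) = Ψ(ŷⱼ) + [η·b_{jk}]₊ · Ψ(ŷₖ)` for `j ≠ k`. -/
theorem stmt9 {K : Type*} [Field K] {N : ℕ} (hN : 1 ≤ N)
    (le : (Fin N → ℤ) → (Fin N → ℤ) → Prop)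
    (hrefl : ∀ a, le a a)
    (hantisymm : ∀ a b, le a b → le b a → a = b)
    (htrans : ∀ a b c, le a b → le b c → le a c)
    (htotal : ∀ a b, le a b ∨ le b a)
    (haddinv : ∀ a b c, le a b → le (a + c) (b + c))
    (Ψ : K → (Fin N → ℤ))
    (hΨmul : ∀ f g : K, f ≠ 0 → g ≠ 0 → Ψ (f * g) = Ψ f + Ψ g)
    (hΨadd : ∀ f g : K, f ≠ 0 → g ≠ 0 → f + g ≠ 0 →
      le (Ψ (f + g)) (Ψ f) ∨ le (Ψ (f + g)) (Ψ g))
    (k₀ : Fin N) (y y' : Fin N → K)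
    (hy : ∀ j, y j ≠ 0) (hy' : ∀ j, y' j ≠ 0)
    (b : Fin N → Fin N → ℤ) (hskew : ∀ j, b j k₀ = - b k₀ j)
    (h'k : y' k₀ = (y k₀)⁻¹)
    (h'j : ∀ j, j ≠ k₀ → y k₀ + 1 ≠ 0 ∧
      y' j = y j * y k₀ ^ (max (b k₀ j) 0) * (y k₀ + 1) ^ (-(b k₀ j)))
    (hΨk : Ψ (y k₀) ≠ 0) :
    Ψ (y' k₀) = - Ψ (y k₀) ∧
    ∀ j, j ≠ k₀ →
      (le 0 (Ψ (y k₀)) → Ψ (y' j) = Ψ (y j) + (max (b j k₀) 0) • Ψ (y k₀)) ∧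
      (¬ le 0 (Ψ (y k₀)) → Ψ (y' j) = Ψ (y j) + (max (-(b j k₀)) 0) • Ψ (y k₀)) :=
  stmt9_general le hantisymm htrans htotal Ψ hΨmul hΨadd k₀ y y' hy b hskew h'k h'j hΨk
end

section
/- Let N ≥ 1 and let S be a finite set. For each s ∈ S let M_s be a real N×N matrix with |det M_s| = 1, and set C_s := M_s((0,∞)^N). Assume: (i) C_s ⊆ (0,∞)^N for every s; (ii) for s ≠ s′, the intersection C_s ∩ C_{s′} is Lebesgue-null; (iii) (0,∞)^N ∖ ⋃_{s∈S} C_s is Lebesgue-null. Let β ∈ ℝ^N have all coordinates β_i > 0, and assume ⟨β, M_s e_j⟩ > 0 for all s ∈ S and 1 ≤ j ≤ N. Then ∏_{i=1}^N β_i^{−1} = Σ_{s∈S} ∏_{j=1}^N ⟨β, M_s e_j⟩^{−1}. -/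
/-!
Both sides are integrals of `x ↦ exp (-⟨β, x⟩)`. Over the orthant the integrand factors into
one-dimensional exponentials, giving `∏ βᵢ⁻¹`. Over a cone `M_s((0,∞)^N)` the linear change of
variables `x = M_s y` (Jacobian `|det M_s| = 1`) turns the integrand into `exp (-⟨M_sᵀβ, y⟩)` on the
orthant, giving `∏ⱼ ⟨β, M_s eⱼ⟩⁻¹`. The cones tile the orthant up to null sets, so the integral
over the orthant is the sum of the integrals over the cones.
-/

open MeasureTheory Set Matrix Function

theorem integral_biUnion_finset₀ {X E ι : Type*} [MeasurableSpace X] {μ : Measure X}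
    [NormedAddCommGroup E] [NormedSpace ℝ E] {f : X → E} (t : Finset ι) {s : ι → Set X}
    (hs : ∀ i ∈ t, NullMeasurableSet (s i) μ) (hd : (t : Set ι).Pairwise (AEDisjoint μ on s))
    (hf : ∀ i ∈ t, IntegrableOn f (s i) μ) :
    ∫ x in ⋃ i ∈ t, s i, f x ∂μ = ∑ i ∈ t, ∫ x in s i, f x ∂μ := by
  rw [← Finset.set_biUnion_coe, biUnion_eq_iUnion, integral_iUnion_ae, tsum_fintype]
  · exact Finset.sum_coe_sort t fun i => ∫ x in s i, f x ∂μ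
  · exact fun i => hs i i.2
  · exact fun i j hij => hd i.2 j.2 (Subtype.coe_ne_coe.2 hij)
  · exact integrableOn_finite_iUnion.2 fun i => hf i i.2

theorem setOf_forall_pos_eq_pi {ι : Type*} :
    {x : ι → ℝ | ∀ i, 0 < x i} = univ.pi fun _ => Ioi 0 := by
  ext; simp

theorem integral_exp_neg_mul_Ioi {b : ℝ} (hb : 0 < b) :
    ∫ x in Ioi (0 : ℝ), Real.exp (-b * x) = b⁻¹ := by
  have h := integral_comp_mul_left_Ioi (fun y => Real.exp (-y)) 0 hb
  simp only [mul_zero, ← neg_mul] at h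
  rw [h, integral_exp_neg_Ioi_zero, smul_eq_mul, mul_one]

section Orthant

variable {ι : Type*} [Fintype ι] {c : ι → ℝ}

theorem exp_neg_dotProduct_eq_prod (c x : ι → ℝ) :
    Real.exp (-(c ⬝ᵥ x)) = ∏ i, Real.exp (-c i * x i) := by
  simp_rw [dotProduct, ← Finset.sum_neg_distrib, Real.exp_sum, neg_mul]

theorem volume_restrict_pi_Ioi :
    (volume : Measure (ι → ℝ)).restrict (univ.pi fun _ => Ioi 0) =
      Measure.pi fun _ => volume.restrict (Ioi 0) := by
  rw [volume_pi, Measure.restrict_pi_pi]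

theorem integrableOn_exp_neg_dotProduct_pi_Ioi (hc : ∀ i, 0 < c i) :
    IntegrableOn (fun x => Real.exp (-(c ⬝ᵥ x))) (univ.pi fun _ => Ioi 0) := by
  simp_rw [IntegrableOn, volume_restrict_pi_Ioi, exp_neg_dotProduct_eq_prod]
  exact Integrable.fintype_prod fun i => exp_neg_integrableOn_Ioi 0 (hc i)

theorem integral_exp_neg_dotProduct_pi_Ioi (hc : ∀ i, 0 < c i) :
    ∫ x in univ.pi (fun _ => Ioi 0), Real.exp (-(c ⬝ᵥ x)) = ∏ i, (c i)⁻¹ := by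
  simp_rw [volume_restrict_pi_Ioi, exp_neg_dotProduct_eq_prod]
  exact (integral_fintype_prod_eq_prod (𝕜 := ℝ) _).trans
    (Finset.prod_congr rfl fun i _ => integral_exp_neg_mul_Ioi (hc i))

end Orthant

section LinearImage

variable {n : Type*} [Fintype n] [DecidableEq n] {M : Matrix n n ℝ} {s : Set (n → ℝ)}

theorem hasFDerivWithinAt_mulVec (M : Matrix n n ℝ) (s : Set (n → ℝ)) (x : n → ℝ) :
    HasFDerivWithinAt (M *ᵥ ·) (LinearMap.toContinuousLinearMap (toLin' M)) s x :=
  (LinearMap.toContinuousLinearMap (toLin' M)).hasFDerivAt.hasFDerivWithinAt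

theorem injective_mulVec_of_det_ne_zero (hM : M.det ≠ 0) : Function.Injective (M *ᵥ ·) :=
  mulVec_injective_iff_isUnit.2 ((isUnit_iff_isUnit_det M).2 hM.isUnit)

theorem measurableSet_image_mulVec (hM : M.det ≠ 0) (hs : MeasurableSet s) :
    MeasurableSet ((M *ᵥ ·) '' s) :=
  measurable_image_of_fderivWithin hs (fun x _ => hasFDerivWithinAt_mulVec M s x)
    (injective_mulVec_of_det_ne_zero hM).injOn

theorem integral_image_mulVec {E : Type*} [NormedAddCommGroup E] [NormedSpace ℝ E]
    (hM : M.det ≠ 0) (hs : MeasurableSet s) (g : (n → ℝ) → E) :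
    ∫ x in (M *ᵥ ·) '' s, g x = |M.det| • ∫ x in s, g (M *ᵥ x) := by
  rw [integral_image_eq_integral_abs_det_fderiv_smul volume hs
    (fun x _ => hasFDerivWithinAt_mulVec M s x) (injective_mulVec_of_det_ne_zero hM).injOn,
    LinearMap.det_toContinuousLinearMap, LinearMap.det_toLin', integral_smul]

theorem integral_exp_neg_dotProduct_image_mulVec_pi_Ioi (hM : M.det ≠ 0) {β : n → ℝ}
    (hβ : ∀ j, 0 < (β ᵥ* M) j) :
    ∫ x in (M *ᵥ ·) '' univ.pi (fun _ => Ioi 0), Real.exp (-(β ⬝ᵥ x)) =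
      |M.det| * ∏ j, ((β ᵥ* M) j)⁻¹ := by
  rw [integral_image_mulVec hM (MeasurableSet.univ_pi fun _ => measurableSet_Ioi)]
  simp_rw [dotProduct_mulVec]
  rw [integral_exp_neg_dotProduct_pi_Ioi hβ, smul_eq_mul]

end LinearImage

theorem stmt14_general {N : ℕ} {ι : Type*} (S : Finset ι)
    (M : ι → Matrix (Fin N) (Fin N) ℝ)
    (hdet : ∀ s ∈ S, |(M s).det| = 1)
    (hsub : ∀ s ∈ S,
      (fun x => (M s).mulVec x) '' {x : Fin N → ℝ | ∀ i, 0 < x i} ⊆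
        {x : Fin N → ℝ | ∀ i, 0 < x i})
    (hnull : ∀ s ∈ S, ∀ s' ∈ S, s ≠ s' →
      volume (((fun x => (M s).mulVec x) '' {x : Fin N → ℝ | ∀ i, 0 < x i}) ∩
        ((fun x => (M s').mulVec x) '' {x : Fin N → ℝ | ∀ i, 0 < x i})) = 0)
    (hcover : volume ({x : Fin N → ℝ | ∀ i, 0 < x i} \
      ⋃ s ∈ S, (fun x => (M s).mulVec x) '' {x : Fin N → ℝ | ∀ i, 0 < x i}) = 0)
    (β : Fin N → ℝ) (hβpos : ∀ i, 0 < β i)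
    (hβ : ∀ s ∈ S, ∀ j : Fin N, 0 < ∑ l : Fin N, β l * M s l j) :
    ∏ i : Fin N, (β i)⁻¹ = ∑ s ∈ S, ∏ j : Fin N, (∑ l : Fin N, β l * M s l j)⁻¹ := by
  rw [setOf_forall_pos_eq_pi] at hsub hnull hcover
  set A : Set (Fin N → ℝ) := univ.pi fun _ => Ioi 0
  have hA : MeasurableSet A := MeasurableSet.univ_pi fun _ => measurableSet_Ioi
  have hdet_ne : ∀ s ∈ S, (M s).det ≠ 0 := fun s hs h => by simpa [h] using hdet s hs
  have hint : IntegrableOn (fun x => Real.exp (-(β ⬝ᵥ x))) A :=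
    integrableOn_exp_neg_dotProduct_pi_Ioi hβpos
  calc ∏ i, (β i)⁻¹ = ∫ x in A, Real.exp (-(β ⬝ᵥ x)) :=
        (integral_exp_neg_dotProduct_pi_Ioi hβpos).symm
    _ = ∫ x in ⋃ s ∈ S, (M s *ᵥ ·) '' A, Real.exp (-(β ⬝ᵥ x)) :=
        setIntegral_congr_set <| ae_eq_set.2
          ⟨hcover, by rw [sdiff_eq_empty.2 (iUnion₂_subset hsub), measure_empty]⟩
    _ = ∑ s ∈ S, ∫ x in (M s *ᵥ ·) '' A, Real.exp (-(β ⬝ᵥ x)) :=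
        integral_biUnion_finset₀ S
          (fun s hs => (measurableSet_image_mulVec (hdet_ne s hs) hA).nullMeasurableSet)
          hnull (fun s hs => hint.mono_set (hsub s hs))
    _ = ∑ s ∈ S, ∏ j, (∑ l, β l * M s l j)⁻¹ := Finset.sum_congr rfl fun s hs => by
        rw [integral_exp_neg_dotProduct_image_mulVec_pi_Ioi (hdet_ne s hs) (hβ s hs), hdet s hs,
          one_mul]
        rfl

/-- if the open positive orthant is covered, up to Lebesgue-null sets, by
pairwise almost-disjoint cones `C_s = M_s((0,∞)^N)` with `|det M_s| = 1`, and `β` has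
positive coordinates with `⟨β, M_s eⱼ⟩ > 0` for all `s, j`, then
`∏ᵢ βᵢ⁻¹ = Σ_s ∏ⱼ ⟨β, M_s eⱼ⟩⁻¹`. -/
theorem stmt14 {N : ℕ} (hN : 1 ≤ N) {ι : Type*} (S : Finset ι)
    (M : ι → Matrix (Fin N) (Fin N) ℝ)
    (hdet : ∀ s ∈ S, |(M s).det| = 1)
    (hsub : ∀ s ∈ S,
      (fun x => (M s).mulVec x) '' {x : Fin N → ℝ | ∀ i, 0 < x i} ⊆
        {x : Fin N → ℝ | ∀ i, 0 < x i})
    (hnull : ∀ s ∈ S, ∀ s' ∈ S, s ≠ s' →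
      volume (((fun x => (M s).mulVec x) '' {x : Fin N → ℝ | ∀ i, 0 < x i}) ∩
        ((fun x => (M s').mulVec x) '' {x : Fin N → ℝ | ∀ i, 0 < x i})) = 0)
    (hcover : volume ({x : Fin N → ℝ | ∀ i, 0 < x i} \
      ⋃ s ∈ S, (fun x => (M s).mulVec x) '' {x : Fin N → ℝ | ∀ i, 0 < x i}) = 0)
    (β : Fin N → ℝ) (hβpos : ∀ i, 0 < β i)
    (hβ : ∀ s ∈ S, ∀ j : Fin N, 0 < ∑ l : Fin N, β l * M s l j) :
    ∏ i : Fin N, (β i)⁻¹ = ∑ s ∈ S, ∏ j : Fin N, (∑ l : Fin N, β l * M s l j)⁻¹ :=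
  stmt14_general S M hdet hsub hnull hcover β hβpos hβ
end
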